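/- arXiv:1910.04021 — 5 statements merged into one kernel-verified Lean document; each statement's English description precedes it below -/
import Mathlib

section
/- For every u ∈ [0,V), the set I_u = {ρ ∈ [0,R] : f(ρ) = φ_u(ρ)} is nonempty and compact, its minimum ρ̌_u and maximum ρ̂_u satisfy 0 < ρ̌_u < ρ̂_u < R, and f(ρ) > φ_u(ρ) holds if and only if ρ ∈ (ρ̌_u, ρ̂_u). -/
/-! The gap `g = f - φ_u` is strictly concave on `[0, R]`. The tangency point `y = ρ̃_u / α` has
`f' y = u < V = f' 0`, so `y > 0`, and strict concavity together with `f 0 = 0` gives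
`u * y < f y` and `α * f y < f (α * y)`. Hence `g` is negative at `0` and at `R` but positive at
`ρ̃_u = α * y`; a strictly concave function with this sign pattern has exactly two zeros on
`[0, R]` and is positive exactly between them. -/

open Set

theorem strictConcaveOn_of_hasDerivAt2_neg {D : Set ℝ} (hD : Convex ℝ D) {f f' f'' : ℝ → ℝ}
    (hf : ∀ x ∈ D, HasDerivAt f (f' x) x) (hf' : ∀ x ∈ D, HasDerivAt f' (f'' x) x)
    (hf'' : ∀ x ∈ D, f'' x < 0) : StrictConcaveOn ℝ D f := by
  have hanti : StrictAntiOn f' D :=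
    strictAntiOn_of_hasDerivWithinAt_neg hD
      (fun x hx ↦ (hf' x hx).continuousAt.continuousWithinAt)
      (fun x hx ↦ (hf' x (interior_subset hx)).hasDerivWithinAt)
      (fun x hx ↦ hf'' x (interior_subset hx))
  refine StrictAntiOn.strictConcaveOn_of_deriv hD
    (fun x hx ↦ (hf x hx).continuousAt.continuousWithinAt) fun x hx y hy hxy ↦ ?_
  rw [(hf x (interior_subset hx)).deriv, (hf y (interior_subset hy)).deriv]
  exact hanti (interior_subset hx) (interior_subset hy) hxy

theorem HasDerivAt.eq_of_eqOn_Icc {f g : ℝ → ℝ} {a b f' g' : ℝ} (hab : a < b)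
    (hfg : EqOn f g (Icc a b)) (hf : HasDerivAt f f' a) (hg : HasDerivAt g g' a) : f' = g' :=
  (uniqueDiffOn_Icc hab a (left_mem_Icc.2 hab.le)).eq_deriv _ hf.hasDerivWithinAt
    (hg.hasDerivWithinAt.congr hfg (hfg (left_mem_Icc.2 hab.le)))

theorem HasDerivAt.const_mul_comp_div_const {f : ℝ → ℝ} {f' α x : ℝ} (hα : α ≠ 0)
    (hf : HasDerivAt f f' (x / α)) : HasDerivAt (fun x ↦ α * f (x / α)) f' x :=
  ((hf.comp x ((hasDerivAt_id x).div_const α)).const_mul α).congr_deriv (by field_simp)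

theorem StrictConcaveOn.neg_of_eq_zero_of_mem_openSegment {E : Type*} [AddCommGroup E]
    [Module ℝ E] {s : Set E} {g : E → ℝ} {x y z : E} (hg : StrictConcaveOn ℝ s g)
    (hx : x ∈ s) (hy : y ∈ s) (hxy : x ≠ y) (hz : z ∈ openSegment ℝ x y) (hgz : g z = 0)
    (hgy : 0 ≤ g y) : g x < 0 := by
  have := hg.lt_on_openSegment hx hy hxy hz
  rw [hgz] at this
  exact (min_lt_iff.1 this).resolve_right hgy.not_gt

theorem StrictConcaveOn.mul_lt_of_hasDerivAt_of_map_zero {s : Set ℝ} {f : ℝ → ℝ} {u y : ℝ}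
    (hf : StrictConcaveOn ℝ s f) (h0 : 0 ∈ s) (hy : y ∈ s) (hy0 : 0 < y) (hf0 : f 0 = 0)
    (hu : HasDerivAt f u y) : u * y < f y := by
  have := hf.lt_slope_of_hasDerivAt h0 hy hy0 hu
  rw [slope_def_field, hf0, sub_zero, sub_zero, lt_div_iff₀ hy0] at this
  exact this

theorem StrictConcaveOn.mul_map_lt_map_mul_of_map_zero {s : Set ℝ} {f : ℝ → ℝ} {α y : ℝ}
    (hf : StrictConcaveOn ℝ s f) (h0 : 0 ∈ s) (hy : y ∈ s) (hy0 : y ≠ 0) (hα : α ∈ Ioo 0 1)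
    (hf0 : f 0 = 0) : α * f y < f (α * y) := by
  have := hf.2 hy h0 hy0 hα.1 (sub_pos.2 hα.2) (add_sub_cancel α 1)
  simpa [hf0] using this

theorem StrictConcaveOn.exists_zeros_Icc {a b c : ℝ} {g : ℝ → ℝ}
    (hg : StrictConcaveOn ℝ (Icc a b) g) (hgc : ContinuousOn g (Icc a b)) (ha : g a < 0)
    (hb : g b < 0) (hc : c ∈ Icc a b) (hc₀ : 0 < g c) :
    ∃ z₁ z₂, a < z₁ ∧ z₁ < z₂ ∧ z₂ < b ∧ {x | x ∈ Icc a b ∧ g x = 0} = {z₁, z₂} ∧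
      ∀ x ∈ Icc a b, 0 < g x ↔ x ∈ Ioo z₁ z₂ := by
  have hac : a < c := hc.1.lt_of_ne (by rintro rfl; linarith)
  have hcb : c < b := hc.2.lt_of_ne (by rintro rfl; linarith)
  obtain ⟨z₁, ⟨haz₁, hz₁c⟩, hz₁⟩ :=
    intermediate_value_Ioo hac.le (hgc.mono (Icc_subset_Icc_right hcb.le)) ⟨ha, hc₀⟩
  obtain ⟨z₂, ⟨hcz₂, hz₂b⟩, hz₂⟩ :=
    intermediate_value_Ioo' hcb.le (hgc.mono (Icc_subset_Icc_left hac.le)) ⟨hb, hc₀⟩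
  have h₁ : z₁ ∈ Icc a b := ⟨haz₁.le, hz₁c.le.trans hc.2⟩
  have h₂ : z₂ ∈ Icc a b := ⟨hc.1.trans hcz₂.le, hz₂b.le⟩
  have hz : z₁ < z₂ := hz₁c.trans hcz₂
  have hpos : ∀ x ∈ Ioo z₁ z₂, 0 < g x := fun x hx ↦ by
    simpa [hz₁, hz₂] using hg.lt_on_openSegment h₁ h₂ hz.ne (openSegment_eq_Ioo hz ▸ hx)
  have hneg : ∀ x ∈ Icc a b, x < z₁ ∨ z₂ < x → g x < 0 := by
    rintro x hx (hx₁ | hx₂)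
    · exact hg.neg_of_eq_zero_of_mem_openSegment hx h₂ (hx₁.trans hz).ne
        (openSegment_eq_Ioo (hx₁.trans hz) ▸ ⟨hx₁, hz⟩) hz₁ hz₂.ge
    · exact hg.neg_of_eq_zero_of_mem_openSegment hx h₁ (hz.trans hx₂).ne'
        (by rw [openSegment_symm, openSegment_eq_Ioo (hz.trans hx₂)]; exact ⟨hz, hx₂⟩) hz₂ hz₁.ge
  refine ⟨z₁, z₂, haz₁, hz, hz₂b, ?_, fun x hx ↦ ⟨fun hgx ↦ ?_, hpos x⟩⟩
  · ext x
    simp only [mem_ofPred_eq, mem_insert_iff, mem_singleton_iff]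
    constructor
    · rintro ⟨hx, hgx⟩
      by_contra! hne
      rcases lt_or_gt_of_ne hne.1 with hx₁ | hx₁
      · exact (hneg x hx (.inl hx₁)).ne hgx
      rcases lt_or_gt_of_ne hne.2 with hx₂ | hx₂
      · exact (hpos x ⟨hx₁, hx₂⟩).ne' hgx
      · exact (hneg x hx (.inr hx₂)).ne hgx
    · rintro (rfl | rfl)
      exacts [⟨h₁, hz₁⟩, ⟨h₂, hz₂⟩]
  · by_contra hx'
    rcases not_and_or.1 hx' with hx₁ | hx₂
    · rcases (not_lt.1 hx₁).lt_or_eq with hx₁ | rfl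
      exacts [(hneg x hx (.inl hx₁)).not_gt hgx, hgx.ne' hz₁]
    · rcases (not_lt.1 hx₂).lt_or_eq with hx₂ | rfl
      exacts [(hneg x hx (.inr hx₂)).not_gt hgx, hgx.ne' hz₂]

theorem StrictConcaveOn.exists_crossings_scaled_tangent {R α u y : ℝ} {f : ℝ → ℝ}
    (hf : StrictConcaveOn ℝ (Icc 0 R) f) (hfc : ContinuousOn f (Icc 0 R)) (hf0 : f 0 = 0)
    (hfR : f R = 0) (hα : α ∈ Ioo 0 1) (hu : 0 ≤ u) (hy : y ∈ Ioc 0 R) (hd : HasDerivAt f u y) :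
    ∃ z₁ z₂, 0 < z₁ ∧ z₁ < z₂ ∧ z₂ < R ∧
      {ρ | ρ ∈ Icc 0 R ∧ f ρ = α * f y + u * (ρ - α * y)} = {z₁, z₂} ∧
      ∀ ρ ∈ Icc 0 R, α * f y + u * (ρ - α * y) < f ρ ↔ ρ ∈ Ioo z₁ z₂ := by
  have h0 : (0 : ℝ) ∈ Icc 0 R := left_mem_Icc.2 (hy.1.le.trans hy.2)
  have hyR : y ∈ Icc 0 R := Ioc_subset_Icc_self hy
  have huy : α * (u * y) < α * f y :=
    mul_lt_mul_of_pos_left (hf.mul_lt_of_hasDerivAt_of_map_zero h0 hyR hy.1 hf0 hd) hα.1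
  have hαy : α * f y < f (α * y) := hf.mul_map_lt_map_mul_of_map_zero h0 hyR hy.1.ne' hα hf0
  set line := fun ρ ↦ α * f y + u * (ρ - α * y)
  have hline : ConvexOn ℝ (Icc 0 R) line :=
    ⟨convex_Icc 0 R, fun a _ b _ s t _ _ hst ↦ le_of_eq (by
      simp only [line, smul_eq_mul]; linear_combination (u * (α * y) - α * f y) * hst)⟩
  have hgap0 : (f - line) 0 < 0 := by simp only [Pi.sub_apply, line, hf0]; linarith
  have hgapR : (f - line) R < 0 := by
    simp only [Pi.sub_apply, line, hfR]; nlinarith [mul_nonneg hu h0.2]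
  have hgap : 0 < (f - line) (α * y) := by simp only [Pi.sub_apply, line]; linarith
  obtain ⟨z₁, z₂, hz₁, hz, hz₂, hzeros, hpos⟩ := (hf.sub_convexOn hline).exists_zeros_Icc
    (hfc.sub (continuous_const.add (continuous_const.mul (continuous_sub_right _))).continuousOn)
    hgap0 hgapR ⟨(mul_pos hα.1 hy.1).le, (mul_le_of_le_one_left hy.1.le hα.2.le).trans hy.2⟩ hgap
  refine ⟨z₁, z₂, hz₁, hz, hz₂, ?_, fun ρ hρ ↦ by rw [← hpos ρ hρ, Pi.sub_apply, sub_pos]⟩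
  simp only [← hzeros, Pi.sub_apply, sub_eq_zero, line]

theorem stmt_3_general
    (R β B α V : ℝ) (f v f' f'' v' : ℝ → ℝ)
    (hR : 0 < R) (hβ : 0 < β) (hα : α ∈ Set.Ioo (0:ℝ) 1)
    (hf0 : f 0 = 0) (hfR : f R = 0)
    (hfv : ∀ ρ ∈ Set.Icc (0:ℝ) R, f ρ = ρ * v ρ)
    (hfd1 : ∀ ρ ∈ Set.Icc (0:ℝ) R, HasDerivAt f (f' ρ) ρ)
    (hfd2 : ∀ ρ ∈ Set.Icc (0:ℝ) R, HasDerivAt f' (f'' ρ) ρ)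
    (hconc : ∀ ρ ∈ Set.Icc (0:ℝ) R, -B ≤ f'' ρ ∧ f'' ρ ≤ -β)
    (hvd : ∀ ρ ∈ Set.Icc (0:ℝ) R, HasDerivAt v (v' ρ) ρ)
    (hV : V = v 0)
    (rt : ℝ → ℝ)
    (hrt : ∀ u ∈ Set.Icc (0:ℝ) V, rt u ∈ Set.Icc (0:ℝ) (α * R) ∧
      HasDerivAt (fun x => α * f (x / α)) u (rt u))
    :
    ∀ u ∈ Set.Ico (0:ℝ) V,
      ({ρ : ℝ | ρ ∈ Set.Icc (0:ℝ) R ∧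
          f ρ = α * f (rt u / α) + u * (ρ - rt u)}).Nonempty ∧
      IsCompact {ρ : ℝ | ρ ∈ Set.Icc (0:ℝ) R ∧
          f ρ = α * f (rt u / α) + u * (ρ - rt u)} ∧
      ∃ rc rh : ℝ,
        IsLeast {ρ : ℝ | ρ ∈ Set.Icc (0:ℝ) R ∧
            f ρ = α * f (rt u / α) + u * (ρ - rt u)} rc ∧
        IsGreatest {ρ : ℝ | ρ ∈ Set.Icc (0:ℝ) R ∧
            f ρ = α * f (rt u / α) + u * (ρ - rt u)} rh ∧
        0 < rc ∧ rc < rh ∧ rh < R ∧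
        ∀ ρ ∈ Set.Icc (0:ℝ) R,
          (α * f (rt u / α) + u * (ρ - rt u) < f ρ ↔ ρ ∈ Set.Ioo rc rh) := by
  rintro u ⟨hu₀, huV⟩
  obtain ⟨⟨hrt₀, hrtR⟩, hrt_deriv⟩ := hrt u ⟨hu₀, huV.le⟩
  have h0 : (0 : ℝ) ∈ Icc 0 R := left_mem_Icc.2 hR.le
  have hV' : V = f' 0 := by
    simpa [hV] using ((hasDerivAt_id' 0).mul (hvd 0 h0)).eq_of_eqOn_Icc hR
      (fun ρ hρ ↦ (hfv ρ hρ).symm) (hfd1 0 h0)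
  set y := rt u / α
  have hrt_eq : rt u = α * y := (mul_div_cancel₀ _ hα.1.ne').symm
  have hy : y ∈ Icc 0 R := ⟨div_nonneg hrt₀ hα.1.le, (div_le_iff₀ hα.1).2 (by linarith)⟩
  have hf'y : f' y = u := ((hfd1 y hy).const_mul_comp_div_const hα.1.ne').unique hrt_deriv
  have hy₀ : 0 < y := hy.1.lt_of_ne (by rintro h; rw [← h] at hf'y; linarith)
  have hf : StrictConcaveOn ℝ (Icc 0 R) f := strictConcaveOn_of_hasDerivAt2_neg (convex_Icc 0 R)
    hfd1 hfd2 fun ρ hρ ↦ by linarith [(hconc ρ hρ).2]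
  obtain ⟨z₁, z₂, hz₁, hz, hz₂, hzeros, hpos⟩ := hf.exists_crossings_scaled_tangent
    (fun ρ hρ ↦ (hfd1 ρ hρ).continuousAt.continuousWithinAt) hf0 hfR hα hu₀ ⟨hy₀, hy.2⟩
    (hf'y ▸ hfd1 y hy)
  rw [hrt_eq, hzeros]
  exact ⟨insert_nonempty _ _, (toFinite _).isCompact, z₁, z₂,
    by simpa only [min_eq_left hz.le] using isLeast_pair (a := z₁) (b := z₂),
    by simpa only [max_eq_right hz.le] using isGreatest_pair (a := z₁) (b := z₂),
    hz₁, hz, hz₂, hpos⟩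

theorem stmt_3
    (R β B α V : ℝ) (f v f' f'' v' : ℝ → ℝ)
    (hR : 0 < R) (hβ : 0 < β) (hB : 0 < B) (hα : α ∈ Set.Ioo (0:ℝ) 1)
    (hf0 : f 0 = 0) (hfR : f R = 0)
    (hfv : ∀ ρ ∈ Set.Icc (0:ℝ) R, f ρ = ρ * v ρ)
    (hfd1 : ∀ ρ ∈ Set.Icc (0:ℝ) R, HasDerivAt f (f' ρ) ρ)
    (hfd2 : ∀ ρ ∈ Set.Icc (0:ℝ) R, HasDerivAt f' (f'' ρ) ρ)
    (hfc : ContinuousOn f'' (Set.Icc (0:ℝ) R))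
    (hconc : ∀ ρ ∈ Set.Icc (0:ℝ) R, -B ≤ f'' ρ ∧ f'' ρ ≤ -β)
    (hvd : ∀ ρ ∈ Set.Icc (0:ℝ) R, HasDerivAt v (v' ρ) ρ)
    (hv'neg : ∀ ρ ∈ Set.Ioo (0:ℝ) R, v' ρ < 0)
    (hvnn : ∀ ρ ∈ Set.Icc (0:ℝ) R, 0 ≤ v ρ)
    (hV : V = v 0)
    (rt : ℝ → ℝ)
    (hrt : ∀ u ∈ Set.Icc (0:ℝ) V, rt u ∈ Set.Icc (0:ℝ) (α * R) ∧
      HasDerivAt (fun x => α * f (x / α)) u (rt u))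
    :
    ∀ u ∈ Set.Ico (0:ℝ) V,
      ({ρ : ℝ | ρ ∈ Set.Icc (0:ℝ) R ∧
          f ρ = α * f (rt u / α) + u * (ρ - rt u)}).Nonempty ∧
      IsCompact {ρ : ℝ | ρ ∈ Set.Icc (0:ℝ) R ∧
          f ρ = α * f (rt u / α) + u * (ρ - rt u)} ∧
      ∃ rc rh : ℝ,
        IsLeast {ρ : ℝ | ρ ∈ Set.Icc (0:ℝ) R ∧
            f ρ = α * f (rt u / α) + u * (ρ - rt u)} rc ∧
        IsGreatest {ρ : ℝ | ρ ∈ Set.Icc (0:ℝ) R ∧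
            f ρ = α * f (rt u / α) + u * (ρ - rt u)} rh ∧
        0 < rc ∧ rc < rh ∧ rh < R ∧
        ∀ ρ ∈ Set.Icc (0:ℝ) R,
          (α * f (rt u / α) + u * (ρ - rt u) < f ρ ↔ ρ ∈ Set.Ioo rc rh) :=
  stmt_3_general R β B α V f v f' f'' v' hR hβ hα hf0 hfR hfv hfd1 hfd2 hconc hvd hV rt hrt
end

section
/- The map u ↦ ρ̌_u is strictly decreasing on [0,V]; moreover it is differentiable at every u ∈ [0,V) with −1/β ≤ ρ̌'(u) < 0, and consequently u ↦ ρ̌_u is Lipschitz continuous on [0,V] with Lipschitz constant 1/β. -/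
/-!
The line `φ_u` is tangent at `ρ̃_u` to the concave reduced flux `f_α ≤ f`, so it lies above `f`
at `0` and below `f` at `ρ̃_u`; by the intermediate value theorem `ρ̌_u ≤ ρ̃_u`, and strong
concavity makes this strict for `u < V`. Writing `φ_u(ρ) = ψ(u) + u ρ`, the intercept `ψ` is a
Legendre transform with `ψ'(u) = -ρ̃_u`, so differentiating `f(ρ̌_u) = ψ(u) + u ρ̌_u` gives
`ρ̌'(u) = (ρ̌_u - ρ̃_u) / (f'(ρ̌_u) - u)`, and `f'(ρ̌_u) - u ≥ β (ρ̃_u - ρ̌_u) > 0` puts it in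
`[-1/β, 0)`. The implicit differentiation needs the a priori bound `β |ρ̌_u - ρ̌_w| ≤ 2 |u - w|`,
which comes from comparing `f` with its tangent at `ρ̌_u`; the mean value inequality then turns
the derivative bound into the Lipschitz bound.
-/

open Set Filter Topology Asymptotics

theorem hasDerivWithinAt_of_squeeze {ψ r : ℝ → ℝ} {s : Set ℝ} {u : ℝ}
    (hr : ContinuousWithinAt r s u) (hlow : ∀ w ∈ s, ψ u + (w - u) * r u ≤ ψ w)
    (hup : ∀ w ∈ s, ψ w ≤ ψ u + (w - u) * r w) : HasDerivWithinAt ψ (r u) s u := by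
  refine .of_isLittleO ?_
  have hr0 : (fun w => r w - r u) =o[𝓝[s] u] fun _ => (1 : ℝ) :=
    (isLittleO_one_iff ℝ).mpr (tendsto_sub_nhds_zero_iff.mpr hr)
  have hsmall := ((isBigO_refl (fun w => w - u) _).mul_isLittleO hr0).congr_right
    fun _ => mul_one _
  refine IsBigO.trans_isLittleO (IsBigO.of_bound 1 ?_) hsmall
  filter_upwards [self_mem_nhdsWithin] with w hw
  have h1 := hlow w hw
  have h2 := hup w hw
  rw [smul_eq_mul, one_mul, Real.norm_eq_abs, Real.norm_eq_abs,
    abs_of_nonneg (by linarith), abs_of_nonneg (by linarith)]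
  linarith

-- Implicit differentiation: the a priori bound `hx` turns the remainder `o(x w - x u)` of `f`
-- into `o(w - u)`.
theorem hasDerivWithinAt_of_apply_eq_line {f ψ x : ℝ → ℝ} {s : Set ℝ} {u f' ψ' : ℝ}
    (hf : HasDerivAt f f' (x u)) (hψ : HasDerivWithinAt ψ ψ' s u)
    (hx : (fun w => x w - x u) =O[𝓝[s] u] fun w => w - u) (hne : f' ≠ u) (hu : u ∈ s)
    (heq : ∀ w ∈ s, f (x w) = ψ w + w * x w) :
    HasDerivWithinAt x ((ψ' + x u) / (f' - u)) s u := by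
  have hx0 : Tendsto (fun w => x w - x u) (𝓝[s] u) (𝓝 0) :=
    hx.trans_tendsto (tendsto_sub_nhds_zero_iff.mpr (tendsto_id.mono_left nhdsWithin_le_nhds))
  have hf' := (hf.isLittleO.comp_tendsto (tendsto_sub_nhds_zero_iff.mp hx0)).trans_isBigO hx
  have hcross := ((isBigO_refl (fun w => w - u) _).mul_isLittleO
    ((isLittleO_one_iff ℝ).mpr hx0)).congr_right (fun _ => mul_one _)
  have key := (hψ.isLittleO.add hcross).sub hf'
  refine .of_isLittleO ((key.const_mul_left (f' - u)⁻¹).congr' ?_ EventuallyEq.rfl)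
  filter_upwards [self_mem_nhdsWithin] with w hw
  have hne' : f' - u ≠ 0 := sub_ne_zero.mpr hne
  simp only [Function.comp, smul_eq_mul, heq w hw, heq u hu]
  field_simp
  ring

theorem strictAntiOn_Icc_of_hasDerivWithinAt_neg {g g' : ℝ → ℝ} {a b : ℝ}
    (hg : ContinuousOn g (Icc a b)) (hg' : ∀ x ∈ Ico a b, HasDerivWithinAt g (g' x) (Icc a b) x)
    (hneg : ∀ x ∈ Ico a b, g' x < 0) : StrictAntiOn g (Icc a b) := by
  refine strictAntiOn_of_hasDerivWithinAt_neg (f' := g') (convex_Icc a b) hg (fun x hx => ?_)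
    (fun x hx => hneg x (Ioo_subset_Ico_self (interior_Icc (a := a) ▸ hx)))
  rw [interior_Icc] at hx ⊢
  exact (hg' x (Ioo_subset_Ico_self hx)).mono Ioo_subset_Icc_self

theorem abs_sub_le_of_hasDerivWithinAt_Icc {g g' : ℝ → ℝ} {a b C : ℝ}
    (hg : ContinuousOn g (Icc a b)) (hg' : ∀ x ∈ Ico a b, HasDerivWithinAt g (g' x) (Icc a b) x)
    (hC : ∀ x ∈ Ico a b, |g' x| ≤ C) {x y : ℝ} (hx : x ∈ Icc a b) (hy : y ∈ Icc a b) :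
    |g x - g y| ≤ C * |x - y| := by
  wlog hxy : x ≤ y generalizing x y
  · rw [abs_sub_comm, abs_sub_comm x]
    exact this hy hx (le_of_not_ge hxy)
  have hsub : Ico x y ⊆ Ico a b := Ico_subset_Ico hx.1 hy.2
  have h := norm_image_sub_le_of_norm_deriv_right_le_segment (hg.mono (Icc_subset_Icc hx.1 hy.2))
    (fun t ht => (hg' t (hsub ht)).mono_of_mem_nhdsWithin (mem_of_superset
      (Icc_mem_nhdsGE (hsub ht).2) (Icc_subset_Icc (hsub ht).1 le_rfl)))
    (fun t ht => hC t (hsub ht)) y (right_mem_Icc.mpr hxy)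
  rwa [Real.norm_eq_abs, abs_sub_comm, ← abs_of_nonneg (sub_nonneg.mpr hxy), abs_sub_comm y] at h

theorem div_mem_Icc_of_mem_Icc_mul {α p R : ℝ} (hα : 0 < α) (hp : p ∈ Icc 0 (α * R)) :
    p / α ∈ Icc 0 R :=
  ⟨div_nonneg hp.1 hα.le, (div_le_iff₀' hα).mpr hp.2⟩

def StrongConcaveOnWithDeriv (s : Set ℝ) (β : ℝ) (f f' : ℝ → ℝ) : Prop :=
  ∀ x ∈ s, ∀ y ∈ s, f y ≤ f x + f' x * (y - x) - β / 2 * (y - x) ^ 2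

theorem strongConcaveOnWithDeriv_of_hasDerivAt {a b β : ℝ} {f f' f'' : ℝ → ℝ}
    (hf : ∀ x ∈ Icc a b, HasDerivAt f (f' x) x)
    (hf' : ∀ x ∈ Icc a b, HasDerivAt f' (f'' x) x) (hf'' : ∀ x ∈ Icc a b, f'' x ≤ -β) :
    StrongConcaveOnWithDeriv (Icc a b) β f f' := by
  have hslope : ∀ x ∈ Icc a b, ∀ y ∈ Icc a b, x ≤ y → f' y - f' x ≤ -β * (y - x) :=
    (convex_Icc a b).image_sub_le_mul_sub_of_deriv_le
      (fun x hx => (hf' x hx).continuousAt.continuousWithinAt)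
      (fun x hx => (hf' x (interior_subset hx)).differentiableAt.differentiableWithinAt)
      (fun x hx => (hf' x (interior_subset hx)).deriv ▸ hf'' x (interior_subset hx))
  intro x hx y hy
  set g := fun t => f x + f' x * (t - x) - β / 2 * (t - x) ^ 2 - f t
  have hg : ∀ t ∈ Icc a b, HasDerivAt g (f' x - β * (t - x) - f' t) t := by
    intro t ht
    have hline : HasDerivAt (fun t => f x + f' x * (t - x)) (f' x) t := by
      simpa using (((hasDerivAt_id' t).sub_const x).const_mul (f' x)).const_add (f x)
    have hsq : HasDerivAt (fun t => β / 2 * (t - x) ^ 2) (β * (t - x)) t :=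
      ((((hasDerivAt_id' t).sub_const x).pow 2).const_mul (β / 2) :
        HasDerivAt (fun t => β / 2 * (t - x) ^ 2) (β / 2 * (2 * (t - x) ^ 1 * 1)) t).congr_deriv
        (by ring)
    exact (hline.sub hsq).sub (hf t ht)
  have hIoo : ∀ {c d}, a ≤ c → d ≤ b → Ioo c d ⊆ Icc a b := fun hc hd =>
    Ioo_subset_Icc_self.trans (Icc_subset_Icc hc hd)
  have hmin : IsMinOn g (Icc a b) x :=
    isMinOn_Icc_of_deriv (hg a ⟨le_rfl, hx.1.trans hx.2⟩).continuousAt (hg x hx).continuousAt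
      (hg b ⟨hx.1.trans hx.2, le_rfl⟩).continuousAt
      (fun t ht => (hg t (hIoo le_rfl hx.2 ht)).differentiableAt.differentiableWithinAt)
      (fun t ht => (hg t (hIoo hx.1 le_rfl ht)).differentiableAt.differentiableWithinAt)
      (fun t ht => by
        rw [(hg t (hIoo le_rfl hx.2 ht)).deriv]
        linarith [hslope t (hIoo le_rfl hx.2 ht) x hx ht.2.le])
      (fun t ht => by
        rw [(hg t (hIoo hx.1 le_rfl ht)).deriv]
        linarith [hslope x hx t (hIoo hx.1 le_rfl ht) ht.1.le])
  have := hmin hy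
  simp only [mem_ofPred_eq, g, sub_self] at this
  linarith

namespace StrongConcaveOnWithDeriv

variable {s : Set ℝ} {R β : ℝ} {f f' : ℝ → ℝ} {x y : ℝ}

theorem le_tangent (hf : StrongConcaveOnWithDeriv s β f f') (hβ : 0 ≤ β) (hx : x ∈ s)
    (hy : y ∈ s) : f y ≤ f x + f' x * (y - x) :=
  (hf x hx y hy).trans (by nlinarith [sq_nonneg (y - x)])

theorem mul_sub_le_sub (hf : StrongConcaveOnWithDeriv s β f f') (hx : x ∈ s) (hy : y ∈ s)
    (hxy : x ≤ y) : β * (y - x) ≤ f' x - f' y := by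
  rcases hxy.eq_or_lt with rfl | hlt
  · simp
  have h := add_le_add (hf x hx y hy) (hf y hy x hx)
  have : 0 ≤ (y - x) * ((f' x - f' y) - β * (y - x)) := by nlinarith
  nlinarith [(mul_nonneg_iff_of_pos_left (sub_pos.mpr hlt)).mp this]

theorem mul_abs_sub_le (hf : StrongConcaveOnWithDeriv s β f f') (hx : x ∈ s) (hy : y ∈ s) :
    β * |y - x| ≤ |f' x - f' y| := by
  rcases le_total x y with hxy | hxy
  · rw [abs_of_nonneg (sub_nonneg.mpr hxy)]
    exact (hf.mul_sub_le_sub hx hy hxy).trans (le_abs_self _)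
  · rw [abs_sub_comm, abs_of_nonneg (sub_nonneg.mpr hxy), abs_sub_comm]
    exact (hf.mul_sub_le_sub hy hx hxy).trans (le_abs_self _)

theorem add_mul_sq_le (hf : StrongConcaveOnWithDeriv s β f f') {a b : ℝ} (ha : 0 ≤ a)
    (hb : 0 ≤ b) (hab : a + b = 1) (hx : x ∈ s) (hy : y ∈ s) (hz : a * x + b * y ∈ s) :
    a * f x + b * f y + a * b * (β / 2 * (x - y) ^ 2) ≤ f (a * x + b * y) := by
  have h1 := mul_le_mul_of_nonneg_left (hf _ hz x hx) ha
  have h2 := mul_le_mul_of_nonneg_left (hf _ hz y hy) hb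
  obtain rfl : b = 1 - a := by linarith
  nlinarith

theorem rescale (hf : StrongConcaveOnWithDeriv (Icc 0 R) β f f') {α : ℝ} (hα : 0 < α) :
    StrongConcaveOnWithDeriv (Icc 0 (α * R)) (β / α) (fun p => α * f (p / α))
      (fun p => f' (p / α)) := by
  intro p hp p' hp'
  have := mul_le_mul_of_nonneg_left
    (hf _ (div_mem_Icc_of_mem_Icc_mul hα hp) _ (div_mem_Icc_of_mem_Icc_mul hα hp')) hα.le
  refine this.trans_eq ?_
  field_simp

end StrongConcaveOnWithDeriv

theorem eq_of_hasDerivAt_rescale {f f' : ℝ → ℝ} {α p u : ℝ} (hα : α ≠ 0)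
    (hf : HasDerivAt f (f' (p / α)) (p / α)) (h : HasDerivAt (fun x => α * f (x / α)) u p) :
    f' (p / α) = u := by
  have hcomp := (hf.comp p ((hasDerivAt_id' p).div_const α)).const_mul α
  rw [mul_one_div, mul_div_cancel₀ _ hα] at hcomp
  exact hcomp.unique h

theorem IsLeast.le_of_crossing {f ℓ : ℝ → ℝ} {a b c r : ℝ}
    (hr : IsLeast {ρ | ρ ∈ Icc a c ∧ f ρ = ℓ ρ} r) (hb : b ∈ Icc a c)
    (hf : ContinuousOn f (Icc a b)) (hℓ : ContinuousOn ℓ (Icc a b)) (ha : f a ≤ ℓ a)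
    (hb' : ℓ b ≤ f b) : r ≤ b := by
  obtain ⟨ρ, hρ, hρ0⟩ := intermediate_value_Icc hb.1 (hf.sub hℓ)
    (show (0 : ℝ) ∈ Icc (f a - ℓ a) (f b - ℓ b) from ⟨by linarith, by linarith⟩)
  exact (hr.2 ⟨⟨hρ.1, hρ.2.trans hb.2⟩, sub_eq_zero.mp hρ0⟩).trans hρ.2

-- The set `I_u` of the paper, with the tangency point `ρ̃_u` as the parameter `p`.
def contactSet (f : ℝ → ℝ) (R α u p : ℝ) : Set ℝ :=
  {ρ | ρ ∈ Icc 0 R ∧ f ρ = α * f (p / α) + u * (ρ - p)}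

section ContactPoint

variable {f f' rt rc : ℝ → ℝ} {R β α V u p r : ℝ}

theorem le_div_of_mem_Icc_mul (hα : α ∈ Ioo 0 1) (hp : p ∈ Icc 0 (α * R)) : p ≤ p / α :=
  (le_div_iff₀ hα.1).mpr (mul_le_of_le_one_right hp.1 hα.2.le)

theorem mul_apply_div_add_sq_le (hα : α ∈ Ioo 0 1)
    (hf : StrongConcaveOnWithDeriv (Icc 0 R) β f f') (hf0 : f 0 = 0) (hp : p ∈ Icc 0 (α * R)) :
    α * f (p / α) + α * (1 - α) * (β / 2 * (p / α) ^ 2) ≤ f p := by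
  have hpα := div_mem_Icc_of_mem_Icc_mul hα.1 hp
  have hR : 0 ≤ R := hpα.1.trans hpα.2
  have h := hf.add_mul_sq_le hα.1.le (sub_nonneg.mpr hα.2.le) (by ring) hpα ⟨le_rfl, hR⟩ (by
      rw [mul_div_cancel₀ _ hα.1.ne', mul_zero, add_zero]
      exact ⟨hp.1, hp.2.trans (mul_le_of_le_one_left hR hα.2.le)⟩)
  rwa [mul_div_cancel₀ _ hα.1.ne', hf0, mul_zero, add_zero, add_zero, sub_zero] at h

theorem mul_apply_div_le_tangent (hα : 0 < α) (hβ : 0 ≤ β)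
    (hf : StrongConcaveOnWithDeriv (Icc 0 R) β f f') (hp : p ∈ Icc 0 (α * R))
    (hpu : f' (p / α) = u) {p' : ℝ} (hp' : p' ∈ Icc 0 (α * R)) :
    α * f (p' / α) ≤ α * f (p / α) + u * (p' - p) :=
  hpu ▸ (hf.rescale hα).le_tangent (div_nonneg hβ hα.le) hp hp'

theorem isLeast_contactSet_le (hα : α ∈ Ioo 0 1) (hβ : 0 ≤ β)
    (hf : StrongConcaveOnWithDeriv (Icc 0 R) β f f') (hfc : ContinuousOn f (Icc 0 R))
    (hf0 : f 0 = 0) (hp : p ∈ Icc 0 (α * R)) (hpu : f' (p / α) = u)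
    (hr : IsLeast (contactSet f R α u p) r) : r ≤ p := by
  have hpR : p ≤ R := (le_div_of_mem_Icc_mul hα hp).trans (div_mem_Icc_of_mem_Icc_mul hα.1 hp).2
  have h0 := mul_apply_div_le_tangent hα.1 hβ hf hp hpu ⟨le_rfl, hp.1.trans hp.2⟩
  have hgain := mul_apply_div_add_sq_le hα hf hf0 hp
  have : 0 ≤ α * (1 - α) * (β / 2 * (p / α) ^ 2) :=
    mul_nonneg (mul_nonneg hα.1.le (sub_nonneg.mpr hα.2.le)) (by positivity)
  refine hr.le_of_crossing (ℓ := fun ρ => α * f (p / α) + u * (ρ - p)) ⟨hp.1, hpR⟩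
    (hfc.mono (Icc_subset_Icc le_rfl hpR)) (by fun_prop) ?_ ?_
  · simp only [zero_div, hf0, mul_zero] at h0 ⊢
    linarith
  · simp only [sub_self, mul_zero, add_zero]
    linarith

theorem isLeast_contactSet_lt (hα : α ∈ Ioo 0 1) (hβ : 0 < β)
    (hf : StrongConcaveOnWithDeriv (Icc 0 R) β f f') (hfc : ContinuousOn f (Icc 0 R))
    (hf0 : f 0 = 0) (hp : p ∈ Icc 0 (α * R)) (hpu : f' (p / α) = u)
    (hr : IsLeast (contactSet f R α u p) r) (hp0 : 0 < p) : r < p := by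
  refine (isLeast_contactSet_le hα hβ.le hf hfc hf0 hp hpu hr).lt_of_ne ?_
  rintro rfl
  have hgain := mul_apply_div_add_sq_le hα hf hf0 hp
  have : 0 < α * (1 - α) * (β / 2 * (r / α) ^ 2) :=
    mul_pos (mul_pos hα.1 (sub_pos.mpr hα.2)) (by have := hα.1; positivity)
  have hr' := hr.1.2
  simp only [sub_self, mul_zero, add_zero] at hr'
  linarith

theorem mul_sub_le_of_isLeast_contactSet (hα : α ∈ Ioo 0 1) (hβ : 0 ≤ β)
    (hf : StrongConcaveOnWithDeriv (Icc 0 R) β f f') (hfc : ContinuousOn f (Icc 0 R))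
    (hf0 : f 0 = 0) (hp : p ∈ Icc 0 (α * R)) (hpu : f' (p / α) = u)
    (hr : IsLeast (contactSet f R α u p) r) : β * (p - r) ≤ f' r - u := by
  have hrp := isLeast_contactSet_le hα hβ hf hfc hf0 hp hpu hr
  have hpp := le_div_of_mem_Icc_mul hα hp
  have h := hf.mul_sub_le_sub hr.1.1 (div_mem_Icc_of_mem_Icc_mul hα.1 hp) (hrp.trans hpp)
  rw [hpu] at h
  nlinarith

theorem isLeast_contactSet_anti (hα : α ∈ Ioo 0 1) (hβ : 0 ≤ β)
    (hf : StrongConcaveOnWithDeriv (Icc 0 R) β f f') (hfc : ContinuousOn f (Icc 0 R))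
    (hf0 : f 0 = 0) {w pw rw : ℝ} (hp : p ∈ Icc 0 (α * R)) (hpu : f' (p / α) = u)
    (hr : IsLeast (contactSet f R α u p) r) (hpw : pw ∈ Icc 0 (α * R))
    (hpwu : f' (pw / α) = w) (hrw : IsLeast (contactSet f R α w pw) rw) (huw : u ≤ w) :
    rw ≤ r := by
  rcases le_total pw r with hle | hle
  · exact (isLeast_contactSet_le hα hβ hf hfc hf0 hpw hpwu hrw).trans hle
  have h0 := mul_apply_div_le_tangent hα.1 hβ hf hpw hpwu ⟨le_rfl, hpw.1.trans hpw.2⟩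
  have hpw' := mul_apply_div_le_tangent hα.1 hβ hf hp hpu hpw
  have hfr := hr.1.2
  refine hrw.le_of_crossing (ℓ := fun ρ => α * f (pw / α) + w * (ρ - pw)) hr.1.1
    (hfc.mono (Icc_subset_Icc le_rfl hr.1.1.2)) (by fun_prop) ?_ ?_
  · simp only [zero_div, hf0, mul_zero] at h0 ⊢
    linarith
  · nlinarith

theorem isLeast_contactSet_sub_le (hα : α ∈ Ioo 0 1) (hβ : 0 < β)
    (hf : StrongConcaveOnWithDeriv (Icc 0 R) β f f') (hfc : ContinuousOn f (Icc 0 R))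
    (hf0 : f 0 = 0) {w pw rw : ℝ} (hp : p ∈ Icc 0 (α * R)) (hpu : f' (p / α) = u)
    (hr : IsLeast (contactSet f R α u p) r) (hpw : pw ∈ Icc 0 (α * R))
    (hpwu : f' (pw / α) = w) (hrw : IsLeast (contactSet f R α w pw) rw) (huw : u ≤ w) :
    β * (r - rw) ≤ 2 * (w - u) := by
  have ha := isLeast_contactSet_le hα hβ.le hf hfc hf0 hp hpu hr
  have hslope := mul_sub_le_of_isLeast_contactSet hα hβ.le hf hfc hf0 hp hpu hr
  have htan := hf r hr.1.1 rw hrw.1.1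
  have henv := mul_apply_div_le_tangent hα.1 hβ.le hf hpw hpwu hp
  have hfr := hr.1.2
  have hfrw := hrw.1.2
  have hkey : (f' r - u) * (r - rw) + β / 2 * (r - rw) ^ 2 ≤ (w - u) * (p - r + (r - rw)) := by
    nlinarith
  -- if `β (r - rw) > 2 (w - u)`, each term on the left of `hkey` beats its counterpart on the right
  by_contra! hlt
  have hδ : 0 < r - rw :=
    pos_of_mul_pos_right ((by linarith : (0:ℝ) ≤ 2 * (w - u)).trans_lt hlt) hβ.le
  nlinarith [mul_le_mul_of_nonneg_right hslope hδ.le, mul_lt_mul_of_pos_left hlt hδ,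
    mul_le_mul_of_nonneg_left hlt.le (sub_nonneg.mpr ha),
    mul_nonneg (sub_nonneg.mpr ha) (sub_nonneg.mpr huw)]

theorem abs_tangentPoint_sub_le (hα : 0 < α) (hβ : 0 < β)
    (hf : StrongConcaveOnWithDeriv (Icc 0 R) β f f')
    (hrt : ∀ u ∈ Icc 0 V, rt u ∈ Icc 0 (α * R) ∧ f' (rt u / α) = u) {u w : ℝ}
    (hu : u ∈ Icc 0 V) (hw : w ∈ Icc 0 V) : |rt w - rt u| ≤ α / β * |w - u| := by
  have h := (hf.rescale hα).mul_abs_sub_le (hrt u hu).1 (hrt w hw).1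
  simp only [(hrt u hu).2, (hrt w hw).2] at h
  rw [div_mul_eq_mul_div, le_div_iff₀ hβ, abs_sub_comm w u]
  rw [div_mul_eq_mul_div, div_le_iff₀ hα] at h
  linarith

theorem abs_contactPoint_sub_le (hα : α ∈ Ioo 0 1) (hβ : 0 < β)
    (hf : StrongConcaveOnWithDeriv (Icc 0 R) β f f') (hfc : ContinuousOn f (Icc 0 R))
    (hf0 : f 0 = 0) (hrt : ∀ u ∈ Icc 0 V, rt u ∈ Icc 0 (α * R) ∧ f' (rt u / α) = u)
    (hrc : ∀ u ∈ Icc 0 V, IsLeast (contactSet f R α u (rt u)) (rc u)) {u w : ℝ}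
    (hu : u ∈ Icc 0 V) (hw : w ∈ Icc 0 V) : |rc w - rc u| ≤ 2 / β * |w - u| := by
  wlog huw : u ≤ w generalizing u w
  · rw [abs_sub_comm, abs_sub_comm w]
    exact this hw hu (le_of_not_ge huw)
  have hanti := isLeast_contactSet_anti hα hβ.le hf hfc hf0 (hrt u hu).1 (hrt u hu).2 (hrc u hu)
    (hrt w hw).1 (hrt w hw).2 (hrc w hw) huw
  have h := isLeast_contactSet_sub_le hα hβ hf hfc hf0 (hrt u hu).1 (hrt u hu).2 (hrc u hu)
    (hrt w hw).1 (hrt w hw).2 (hrc w hw) huw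
  rw [abs_sub_comm, abs_of_nonneg (sub_nonneg.mpr hanti), abs_of_nonneg (sub_nonneg.mpr huw),
    div_mul_eq_mul_div, le_div_iff₀ hβ, mul_comm]
  exact h

theorem hasDerivWithinAt_intercept (hα : 0 < α) (hβ : 0 < β)
    (hf : StrongConcaveOnWithDeriv (Icc 0 R) β f f')
    (hrt : ∀ u ∈ Icc 0 V, rt u ∈ Icc 0 (α * R) ∧ f' (rt u / α) = u) {u : ℝ}
    (hu : u ∈ Icc 0 V) :
    HasDerivWithinAt (fun w => α * f (rt w / α) - w * rt w) (-rt u) (Icc 0 V) u := by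
  have hcont : ContinuousOn (fun w => -rt w) (Icc 0 V) :=
    (LipschitzOnWith.of_dist_le' fun w hw v hv => by
      simpa only [Real.dist_eq, neg_sub_neg, abs_sub_comm (rt v)] using
        abs_tangentPoint_sub_le hα hβ hf hrt hv hw).continuousOn.neg
  -- the tangent line to `f_α` at `rt u` lies above `f_α` at `rt w`, and vice versa
  refine hasDerivWithinAt_of_squeeze (hcont u hu) (fun w hw => ?_) (fun w hw => ?_)
  · have := mul_apply_div_le_tangent hα hβ.le hf (hrt w hw).1 (hrt w hw).2 (hrt u hu).1
    linarith
  · have := mul_apply_div_le_tangent hα hβ.le hf (hrt u hu).1 (hrt u hu).2 (hrt w hw).1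
    linarith

theorem contactPoint_lt_tangentPoint (hα : α ∈ Ioo 0 1) (hβ : 0 < β)
    (hf : StrongConcaveOnWithDeriv (Icc 0 R) β f f') (hfc : ContinuousOn f (Icc 0 R))
    (hf0 : f 0 = 0) (hf'0 : f' 0 = V)
    (hrt : ∀ u ∈ Icc 0 V, rt u ∈ Icc 0 (α * R) ∧ f' (rt u / α) = u)
    (hrc : ∀ u ∈ Icc 0 V, IsLeast (contactSet f R α u (rt u)) (rc u)) {u : ℝ}
    (hu : u ∈ Ico 0 V) : rc u < rt u := by
  have hu' : u ∈ Icc 0 V := Ico_subset_Icc_self hu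
  refine isLeast_contactSet_lt hα hβ hf hfc hf0 (hrt u hu').1 (hrt u hu').2 (hrc u hu')
    ((hrt u hu').1.1.lt_of_ne fun h => hu.2.ne ?_)
  rw [← hf'0, ← (hrt u hu').2, ← h, zero_div]

theorem hasDerivWithinAt_contactPoint (hα : α ∈ Ioo 0 1) (hβ : 0 < β)
    (hfd : ∀ ρ ∈ Icc 0 R, HasDerivAt f (f' ρ) ρ)
    (hf : StrongConcaveOnWithDeriv (Icc 0 R) β f f')
    (hf0 : f 0 = 0) (hf'0 : f' 0 = V)
    (hrt : ∀ u ∈ Icc 0 V, rt u ∈ Icc 0 (α * R) ∧ f' (rt u / α) = u)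
    (hrc : ∀ u ∈ Icc 0 V, IsLeast (contactSet f R α u (rt u)) (rc u)) {u : ℝ}
    (hu : u ∈ Ico 0 V) :
    HasDerivWithinAt rc ((rc u - rt u) / (f' (rc u) - u)) (Icc 0 V) u ∧
      -(1 / β) ≤ (rc u - rt u) / (f' (rc u) - u) ∧ (rc u - rt u) / (f' (rc u) - u) < 0 := by
  have hfc : ContinuousOn f (Icc 0 R) := fun ρ hρ => (hfd ρ hρ).continuousAt.continuousWithinAt
  have hu' : u ∈ Icc 0 V := Ico_subset_Icc_self hu
  have hlt := contactPoint_lt_tangentPoint hα hβ hf hfc hf0 hf'0 hrt hrc hu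
  have hslope := mul_sub_le_of_isLeast_contactSet hα hβ.le hf hfc hf0 (hrt u hu').1
    (hrt u hu').2 (hrc u hu')
  have hm : 0 < f' (rc u) - u := (mul_pos hβ (sub_pos.mpr hlt)).trans_le hslope
  refine ⟨?_, ?_, div_neg_of_neg_of_pos (sub_neg.mpr hlt) hm⟩
  · have hO : (fun w => rc w - rc u) =O[𝓝[Icc 0 V] u] fun w => w - u :=
      .of_bound (2 / β) (eventually_nhdsWithin_of_forall fun w hw => by
        simpa only [Real.norm_eq_abs] using
          abs_contactPoint_sub_le hα hβ hf hfc hf0 hrt hrc hu' hw)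
    have h := hasDerivWithinAt_of_apply_eq_line (hfd _ (hrc u hu').1.1)
      (hasDerivWithinAt_intercept hα.1 hβ hf hrt hu') hO (sub_pos.mp hm).ne' hu'
      (fun w hw => by rw [(hrc w hw).1.2]; ring)
    rwa [neg_add_eq_sub] at h
  · rw [neg_le, ← neg_div, neg_sub, div_le_div_iff₀ hm hβ]
    linarith

end ContactPoint

theorem stmt_6_general
    (R β B α V : ℝ) (f v f' f'' v' : ℝ → ℝ)
    (hR : 0 < R) (hβ : 0 < β) (hα : α ∈ Set.Ioo (0:ℝ) 1)
    (hf0 : f 0 = 0)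
    (hfv : ∀ ρ ∈ Set.Icc (0:ℝ) R, f ρ = ρ * v ρ)
    (hfd1 : ∀ ρ ∈ Set.Icc (0:ℝ) R, HasDerivAt f (f' ρ) ρ)
    (hfd2 : ∀ ρ ∈ Set.Icc (0:ℝ) R, HasDerivAt f' (f'' ρ) ρ)
    (hconc : ∀ ρ ∈ Set.Icc (0:ℝ) R, -B ≤ f'' ρ ∧ f'' ρ ≤ -β)
    (hvd : ∀ ρ ∈ Set.Icc (0:ℝ) R, HasDerivAt v (v' ρ) ρ)
    (hV : V = v 0)
    (rt : ℝ → ℝ)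
    (hrt : ∀ u ∈ Set.Icc (0:ℝ) V, rt u ∈ Set.Icc (0:ℝ) (α * R) ∧
      HasDerivAt (fun x => α * f (x / α)) u (rt u))
    (rc : ℝ → ℝ)
    (hrc : ∀ u ∈ Set.Icc (0:ℝ) V, IsLeast
      {ρ : ℝ | ρ ∈ Set.Icc (0:ℝ) R ∧ f ρ = α * f (rt u / α) + u * (ρ - rt u)} (rc u))
    :
    StrictAntiOn rc (Set.Icc (0:ℝ) V) ∧
    (∀ u ∈ Set.Ico (0:ℝ) V, ∃ d : ℝ,
      HasDerivWithinAt rc d (Set.Icc (0:ℝ) V) u ∧ -(1 / β) ≤ d ∧ d < 0) ∧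
    ∀ u₁ ∈ Set.Icc (0:ℝ) V, ∀ u₂ ∈ Set.Icc (0:ℝ) V,
      |rc u₁ - rc u₂| ≤ (1 / β) * |u₁ - u₂| := by
  have hf := strongConcaveOnWithDeriv_of_hasDerivAt hfd1 hfd2 fun ρ hρ => (hconc ρ hρ).2
  have h0 : (0 : ℝ) ∈ Icc 0 R := left_mem_Icc.mpr hR.le
  have hf'0 : f' 0 = V := by
    have hmul := ((hasDerivAt_id 0).mul (hvd 0 h0)).hasDerivWithinAt (s := Icc 0 R)
    rw [hV, ((uniqueDiffOn_Icc hR) 0 h0).eq_deriv _ (hfd1 0 h0).hasDerivWithinAt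
      (hmul.congr (fun ρ hρ => hfv ρ hρ) (hfv 0 h0))]
    simp
  have hrt' : ∀ u ∈ Icc 0 V, rt u ∈ Icc 0 (α * R) ∧ f' (rt u / α) = u := fun u hu =>
    ⟨(hrt u hu).1, eq_of_hasDerivAt_rescale hα.1.ne'
      (hfd1 _ (div_mem_Icc_of_mem_Icc_mul hα.1 (hrt u hu).1)) (hrt u hu).2⟩
  have hcont : ContinuousOn rc (Icc 0 V) :=
    (LipschitzOnWith.of_dist_le' fun u hu w hw => abs_contactPoint_sub_le hα hβ hf
      (fun ρ hρ => (hfd1 ρ hρ).continuousAt.continuousWithinAt) hf0 hrt' hrc hw hu).continuousOn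
  have hderiv := fun u (hu : u ∈ Ico 0 V) =>
    hasDerivWithinAt_contactPoint hα hβ hfd1 hf hf0 hf'0 hrt' hrc hu
  refine ⟨strictAntiOn_Icc_of_hasDerivWithinAt_neg hcont (fun u hu => (hderiv u hu).1)
    (fun u hu => (hderiv u hu).2.2), fun u hu => ⟨_, hderiv u hu⟩, fun u₁ hu₁ u₂ hu₂ =>
    abs_sub_le_of_hasDerivWithinAt_Icc hcont (fun u hu => (hderiv u hu).1)
      (fun u hu => abs_le.mpr ⟨(hderiv u hu).2.1, ?_⟩) hu₁ hu₂⟩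
  linarith [(hderiv u hu).2.2, one_div_pos.mpr hβ]

theorem stmt_6
    (R β B α V : ℝ) (f v f' f'' v' : ℝ → ℝ)
    (hR : 0 < R) (hβ : 0 < β) (hB : 0 < B) (hα : α ∈ Set.Ioo (0:ℝ) 1)
    (hf0 : f 0 = 0) (hfR : f R = 0)
    (hfv : ∀ ρ ∈ Set.Icc (0:ℝ) R, f ρ = ρ * v ρ)
    (hfd1 : ∀ ρ ∈ Set.Icc (0:ℝ) R, HasDerivAt f (f' ρ) ρ)
    (hfd2 : ∀ ρ ∈ Set.Icc (0:ℝ) R, HasDerivAt f' (f'' ρ) ρ)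
    (hfc : ContinuousOn f'' (Set.Icc (0:ℝ) R))
    (hconc : ∀ ρ ∈ Set.Icc (0:ℝ) R, -B ≤ f'' ρ ∧ f'' ρ ≤ -β)
    (hvd : ∀ ρ ∈ Set.Icc (0:ℝ) R, HasDerivAt v (v' ρ) ρ)
    (hv'neg : ∀ ρ ∈ Set.Ioo (0:ℝ) R, v' ρ < 0)
    (hvnn : ∀ ρ ∈ Set.Icc (0:ℝ) R, 0 ≤ v ρ)
    (hV : V = v 0)
    (rt : ℝ → ℝ)
    (hrt : ∀ u ∈ Set.Icc (0:ℝ) V, rt u ∈ Set.Icc (0:ℝ) (α * R) ∧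
      HasDerivAt (fun x => α * f (x / α)) u (rt u))
    (rc rh : ℝ → ℝ)
    (hrc : ∀ u ∈ Set.Icc (0:ℝ) V, IsLeast
      {ρ : ℝ | ρ ∈ Set.Icc (0:ℝ) R ∧ f ρ = α * f (rt u / α) + u * (ρ - rt u)} (rc u))
    (hrh : ∀ u ∈ Set.Icc (0:ℝ) V, IsGreatest
      {ρ : ℝ | ρ ∈ Set.Icc (0:ℝ) R ∧ f ρ = α * f (rt u / α) + u * (ρ - rt u)} (rh u))
    :
    StrictAntiOn rc (Set.Icc (0:ℝ) V) ∧
    (∀ u ∈ Set.Ico (0:ℝ) V, ∃ d : ℝ,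
      HasDerivWithinAt rc d (Set.Icc (0:ℝ) V) u ∧ -(1 / β) ≤ d ∧ d < 0) ∧
    ∀ u₁ ∈ Set.Icc (0:ℝ) V, ∀ u₂ ∈ Set.Icc (0:ℝ) V,
      |rc u₁ - rc u₂| ≤ (1 / β) * |u₁ - u₂| :=
  stmt_6_general R β B α V f v f' f'' v' hR hβ hα hf0 hfv hfd1 hfd2 hconc hvd hV rt hrt rc hrc
end

section
/- The map u ↦ ρ̂_u is strictly decreasing on [0,V]; moreover it is differentiable at every u ∈ [0,V) with −∞ < ρ̂'(u) ≤ −1/B. -/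
open Set Filter Topology

/-!
For a slope `u`, let `s` be the point with `f' s = u`, so that `ρ̃_u = α s`. The gap `f - φ_u` is
strictly concave with maximum `(1 - α) (f s - u s) ≥ 0` at `s`, so `ρ̂_u` is its unique zero to the
right of `s`, where it strictly decreases. Raising `u` pushes the gap below zero at `ρ̂_u`, which
moves the zero to the left. Subtracting the contact equations at `u` and `w` gives
`(ρ̂_w - ρ̂_u) (slope f ρ̂_u ρ̂_w - u) = α (I w - I u) + (w - u) ρ̂_w` for the tangent intercept
`I u = f s - u s`, whose derivative is `-s`; letting `w → u` yields
`ρ̂'(u) = (ρ̂_u - α s) / (f' ρ̂_u - u)`, and this is at most `-1/B` because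
`u - f' ρ̂_u ≤ B (ρ̂_u - s)`.
-/

section DerivBounds

variable {D : Set ℝ} {g g' : ℝ → ℝ} {c : ℝ}

lemma antitoneOn_add_mul_of_hasDerivAt_le (hD : Convex ℝ D)
    (hg : ∀ x ∈ D, HasDerivAt g (g' x) x) (hc : ∀ x ∈ D, g' x ≤ -c) :
    AntitoneOn (fun x => g x + c * x) D := by
  have hd : ∀ x ∈ D, HasDerivAt (fun x => g x + c * x) (g' x + c) x := fun x hx => by
    simpa using (hg x hx).fun_add ((hasDerivAt_id x).const_mul c)
  refine antitoneOn_of_hasDerivWithinAt_nonpos hD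
    (fun x hx => (hd x hx).continuousAt.continuousWithinAt)
    (fun x hx => (hd x (interior_subset hx)).hasDerivWithinAt) fun x hx => ?_
  linarith [hc x (interior_subset hx)]

lemma monotoneOn_add_mul_of_le_hasDerivAt (hD : Convex ℝ D)
    (hg : ∀ x ∈ D, HasDerivAt g (g' x) x) (hc : ∀ x ∈ D, -c ≤ g' x) :
    MonotoneOn (fun x => g x + c * x) D := by
  have hd : ∀ x ∈ D, HasDerivAt (fun x => g x + c * x) (g' x + c) x := fun x hx => by
    simpa using (hg x hx).fun_add ((hasDerivAt_id x).const_mul c)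
  refine monotoneOn_of_hasDerivWithinAt_nonneg hD
    (fun x hx => (hd x hx).continuousAt.continuousWithinAt)
    (fun x hx => (hd x (interior_subset hx)).hasDerivWithinAt) fun x hx => ?_
  linarith [hc x (interior_subset hx)]

lemma AntitoneOn.strictAntiOn_of_add_mul (h : AntitoneOn (fun x => g x + c * x) D) (hc : 0 < c) :
    StrictAntiOn g D := fun x hx y hy hxy => by
  have := h hx hy hxy.le
  simp only at this
  nlinarith

lemma lipschitzOnWith_of_antitoneOn_add_mul {s : ℝ → ℝ} {T : Set ℝ}
    (h : AntitoneOn (fun x => g x + c * x) D) (hc : 0 < c)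
    (hs : ∀ u ∈ T, s u ∈ D ∧ g (s u) = u) : LipschitzOnWith (Real.toNNReal c⁻¹) s T := by
  refine LipschitzOnWith.of_dist_le_mul fun u hu w hw => ?_
  rw [Real.coe_toNNReal _ (inv_nonneg.2 hc.le), Real.dist_eq, Real.dist_eq, inv_mul_eq_div,
    le_div_iff₀ hc]
  obtain ⟨hsu, hgu⟩ := hs u hu
  obtain ⟨hsw, hgw⟩ := hs w hw
  rcases le_total (s u) (s w) with hle | hle
  · have := h hsu hsw hle
    simp only [hgu, hgw] at this
    rw [abs_of_nonpos (by linarith), abs_of_nonneg (by nlinarith)]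
    linarith
  · have := h hsw hsu hle
    simp only [hgu, hgw] at this
    rw [abs_of_nonneg (by linarith), abs_of_nonpos (by nlinarith)]
    linarith

end DerivBounds

lemma hasDerivAt_const_mul_comp_div {f : ℝ → ℝ} {d α x : ℝ} (hα : α ≠ 0)
    (hf : HasDerivAt f d (x / α)) : HasDerivAt (fun y => α * f (y / α)) d x := by
  refine ((hf.comp x ((hasDerivAt_id' x).div_const α)).const_mul α).congr_deriv ?_
  field_simp

lemma hasDerivWithinAt_of_abs_sub_le {F σ : ℝ → ℝ} {T : Set ℝ} {u : ℝ}
    (hσ : ContinuousWithinAt σ T u)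
    (h : ∀ w ∈ T, |F w - F u - (w - u) * σ u| ≤ |w - u| * |σ w - σ u|) :
    HasDerivWithinAt F (σ u) T u := by
  rw [hasDerivWithinAt_iff_isLittleO]
  have hsmall : (fun w => (σ w - σ u) * (w - u)) =o[𝓝[T] u] fun w => w - u := by
    have h0 : (fun w => σ w - σ u) =o[𝓝[T] u] fun _ => (1 : ℝ) :=
      (Asymptotics.isLittleO_one_iff ℝ).2 (by simpa using hσ.sub_const (σ u))
    simpa using h0.mul_isBigO (Asymptotics.isBigO_refl (fun w => w - u) _)
  refine Asymptotics.IsBigO.trans_isLittleO ?_ hsmall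
  refine Asymptotics.IsBigO.of_bound 1 (eventually_nhdsWithin_of_forall fun w hw => ?_)
  simpa [abs_mul, mul_comm, smul_eq_mul] using h w hw

section Tangent

variable {f f' : ℝ → ℝ} {a b t ρ : ℝ}

lemma strictAntiOn_sub_mul_deriv (hf : ∀ x ∈ Icc a b, HasDerivAt f (f' x) x)
    (hf' : StrictAntiOn f' (Icc a b)) (ht : t ∈ Icc a b) :
    StrictAntiOn (fun ρ => f ρ - f' t * ρ) (Icc t b) := by
  have hsub : Icc t b ⊆ Icc a b := Icc_subset_Icc_left ht.1
  have hd : ∀ x ∈ Icc t b, HasDerivAt (fun ρ => f ρ - f' t * ρ) (f' x - f' t) x := fun x hx => by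
    simpa using (hf x (hsub hx)).fun_sub ((hasDerivAt_id x).const_mul (f' t))
  refine strictAntiOn_of_hasDerivWithinAt_neg (convex_Icc t b)
    (fun x hx => (hd x hx).continuousAt.continuousWithinAt)
    (fun x hx => (hd x (interior_subset hx)).hasDerivWithinAt) fun x hx => ?_
  rw [interior_Icc] at hx
  linarith [hf' ht (hsub (Ioo_subset_Icc_self hx)) hx.1]

lemma strictMonoOn_sub_mul_deriv (hf : ∀ x ∈ Icc a b, HasDerivAt f (f' x) x)
    (hf' : StrictAntiOn f' (Icc a b)) (ht : t ∈ Icc a b) :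
    StrictMonoOn (fun ρ => f ρ - f' t * ρ) (Icc a t) := by
  have hsub : Icc a t ⊆ Icc a b := Icc_subset_Icc_right ht.2
  have hd : ∀ x ∈ Icc a t, HasDerivAt (fun ρ => f ρ - f' t * ρ) (f' x - f' t) x := fun x hx => by
    simpa using (hf x (hsub hx)).fun_sub ((hasDerivAt_id x).const_mul (f' t))
  refine strictMonoOn_of_hasDerivWithinAt_pos (convex_Icc a t)
    (fun x hx => (hd x hx).continuousAt.continuousWithinAt)
    (fun x hx => (hd x (interior_subset hx)).hasDerivWithinAt) fun x hx => ?_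
  rw [interior_Icc] at hx
  linarith [hf' (hsub (Ioo_subset_Icc_self hx)) ht hx.2]

lemma sub_mul_deriv_lt (hf : ∀ x ∈ Icc a b, HasDerivAt f (f' x) x)
    (hf' : StrictAntiOn f' (Icc a b)) (ht : t ∈ Icc a b) (hρ : ρ ∈ Icc a b) (hne : ρ ≠ t) :
    f ρ - f' t * ρ < f t - f' t * t := by
  rcases hne.lt_or_gt with hlt | hlt
  · exact strictMonoOn_sub_mul_deriv hf hf' ht ⟨hρ.1, hlt.le⟩ ⟨ht.1, le_rfl⟩ hlt
  · exact strictAntiOn_sub_mul_deriv hf hf' ht ⟨le_rfl, ht.2⟩ ⟨hlt.le, hρ.2⟩ hlt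

lemma sub_mul_deriv_le (hf : ∀ x ∈ Icc a b, HasDerivAt f (f' x) x)
    (hf' : StrictAntiOn f' (Icc a b)) (ht : t ∈ Icc a b) (hρ : ρ ∈ Icc a b) :
    f ρ - f' t * ρ ≤ f t - f' t * t := by
  rcases eq_or_ne ρ t with rfl | hne
  · exact le_rfl
  · exact (sub_mul_deriv_lt hf hf' ht hρ hne).le

end Tangent

/-- With `t = ρ̃_u / α`, `tangentGap f α t u` is `f - φ_u`. -/
def tangentGap (f : ℝ → ℝ) (α t u ρ : ℝ) : ℝ := f ρ - (α * f t + u * (ρ - α * t))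

section Gap

variable {f f' : ℝ → ℝ} {R α t u r ρ : ℝ}

lemma tangentGap_eq : tangentGap f α t u ρ = (f ρ - u * ρ) - α * (f t - u * t) := by
  unfold tangentGap; ring

lemma tangentGap_self : tangentGap f α t u t = (1 - α) * (f t - u * t) := by
  unfold tangentGap; ring

lemma continuousOn_tangentGap (hf : ContinuousOn f (Icc 0 R)) :
    ContinuousOn (tangentGap f α t u) (Icc 0 R) :=
  hf.sub (by fun_prop)

lemma continuousWithinAt_tangentGap {s : ℝ → ℝ} {T : Set ℝ} (hf : ContinuousAt f (s u))
    (hs : ContinuousWithinAt s T u) :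
    ContinuousWithinAt (fun w => tangentGap f α (s w) w ρ) T u := by
  have hfs := hf.comp_continuousWithinAt hs
  exact continuousWithinAt_const.sub ((continuousWithinAt_const.mul hfs).add
    (continuousWithinAt_id.mul (continuousWithinAt_const.sub (continuousWithinAt_const.mul hs))))

lemma tangent_intercept_nonneg (hf : ∀ x ∈ Icc 0 R, HasDerivAt f (f' x) x)
    (hf' : StrictAntiOn f' (Icc 0 R)) (ht : t ∈ Icc 0 R) (hft : f' t = u) (hf0 : f 0 = 0) :
    0 ≤ f t - u * t := by
  simpa [hf0, hft] using sub_mul_deriv_le hf hf' ht ⟨le_rfl, ht.1.trans ht.2⟩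

lemma tangent_intercept_pos (hf : ∀ x ∈ Icc 0 R, HasDerivAt f (f' x) x)
    (hf' : StrictAntiOn f' (Icc 0 R)) (ht : t ∈ Icc 0 R) (hft : f' t = u) (hf0 : f 0 = 0)
    (ht0 : 0 < t) : 0 < f t - u * t := by
  simpa [hf0, hft] using sub_mul_deriv_lt hf hf' ht ⟨le_rfl, ht.1.trans ht.2⟩ ht0.ne

lemma tangentGap_right_nonpos (hf : ∀ x ∈ Icc 0 R, HasDerivAt f (f' x) x)
    (hf' : StrictAntiOn f' (Icc 0 R)) (ht : t ∈ Icc 0 R) (hft : f' t = u) (hf0 : f 0 = 0)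
    (hfR : f R = 0) (hα : 0 ≤ α) (hu : 0 ≤ u) : tangentGap f α t u R ≤ 0 := by
  rw [tangentGap_eq, hfR]
  nlinarith [mul_nonneg hα (tangent_intercept_nonneg hf hf' ht hft hf0),
    mul_nonneg hu (ht.1.trans ht.2)]

lemma le_of_tangentGap_nonneg (hf : ContinuousOn f (Icc 0 R)) (hR : tangentGap f α t u R ≤ 0)
    (hr : IsGreatest {ρ | ρ ∈ Icc 0 R ∧ tangentGap f α t u ρ = 0} r) (hρ : ρ ∈ Icc 0 R)
    (hg : 0 ≤ tangentGap f α t u ρ) : ρ ≤ r := by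
  have hsub : Icc ρ R ⊆ Icc 0 R := Icc_subset_Icc_left hρ.1
  obtain ⟨x, hx, hx0⟩ :=
    intermediate_value_Icc' hρ.2 ((continuousOn_tangentGap hf).mono hsub) ⟨hR, hg⟩
  exact hx.1.trans (hr.2 ⟨hsub hx, hx0⟩)

lemma tangentGap_lt_of_lt (hf : ∀ x ∈ Icc 0 R, HasDerivAt f (f' x) x)
    (hf' : StrictAntiOn f' (Icc 0 R)) (ht : t ∈ Icc 0 R) (hft : f' t = u) {ρ₁ ρ₂ : ℝ}
    (hρ₁ : ρ₁ ∈ Icc t R) (hρ₂ : ρ₂ ∈ Icc t R) (hlt : ρ₁ < ρ₂) :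
    tangentGap f α t u ρ₂ < tangentGap f α t u ρ₁ := by
  have := strictAntiOn_sub_mul_deriv hf hf' ht hρ₁ hρ₂ hlt
  rw [hft] at this
  rw [tangentGap_eq, tangentGap_eq]
  linarith

lemma lt_of_tangentGap_neg (hf : ∀ x ∈ Icc 0 R, HasDerivAt f (f' x) x)
    (hf' : StrictAntiOn f' (Icc 0 R)) (ht : t ∈ Icc 0 R) (hft : f' t = u) (htr : t ≤ r)
    (hr : IsGreatest {ρ | ρ ∈ Icc 0 R ∧ tangentGap f α t u ρ = 0} r) (hρ : ρ ∈ Icc t R)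
    (hg : tangentGap f α t u ρ < 0) : r < ρ := by
  by_contra! hρr
  rcases hρr.lt_or_eq with hlt | rfl
  · linarith [hr.1.2, tangentGap_lt_of_lt (α := α) hf hf' ht hft hρ ⟨htr, hr.1.1.2⟩ hlt]
  · linarith [hr.1.2]

end Gap

/-- `s u = ρ̃_u / α` and `rh u = ρ̂_u`. -/
structure TangentSetting (f f' s rh : ℝ → ℝ) (R α V : ℝ) : Prop where
  hasDerivAt : ∀ x ∈ Icc 0 R, HasDerivAt f (f' x) x
  strictAntiOn : StrictAntiOn f' (Icc 0 R)
  apply_zero : f 0 = 0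
  apply_right : f R = 0
  nonneg : 0 ≤ α
  lt_one : α < 1
  mem : ∀ u ∈ Icc 0 V, s u ∈ Icc 0 R
  deriv_eq : ∀ u ∈ Icc 0 V, f' (s u) = u
  isGreatest : ∀ u ∈ Icc 0 V, IsGreatest {ρ | ρ ∈ Icc 0 R ∧ tangentGap f α (s u) u ρ = 0} (rh u)

namespace TangentSetting

variable {f f' s rh : ℝ → ℝ} {R α V u ρ : ℝ}

lemma continuousOn (h : TangentSetting f f' s rh R α V) : ContinuousOn f (Icc 0 R) :=
  fun x hx => (h.hasDerivAt x hx).continuousAt.continuousWithinAt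

lemma le_rh (h : TangentSetting f f' s rh R α V) (hu : u ∈ Icc 0 V) (hρ : ρ ∈ Icc 0 R)
    (hg : 0 ≤ tangentGap f α (s u) u ρ) : ρ ≤ rh u :=
  le_of_tangentGap_nonneg h.continuousOn
    (tangentGap_right_nonpos h.hasDerivAt h.strictAntiOn (h.mem u hu) (h.deriv_eq u hu)
      h.apply_zero h.apply_right h.nonneg hu.1) (h.isGreatest u hu) hρ hg

lemma self_le_rh (h : TangentSetting f f' s rh R α V) (hu : u ∈ Icc 0 V) : s u ≤ rh u := by
  refine h.le_rh hu (h.mem u hu) ?_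
  rw [tangentGap_self]
  exact mul_nonneg (by linarith [h.lt_one]) (tangent_intercept_nonneg h.hasDerivAt h.strictAntiOn
    (h.mem u hu) (h.deriv_eq u hu) h.apply_zero)

lemma rh_lt (h : TangentSetting f f' s rh R α V) (hu : u ∈ Icc 0 V) (hρ : ρ ∈ Icc (s u) R)
    (hg : tangentGap f α (s u) u ρ < 0) : rh u < ρ :=
  lt_of_tangentGap_neg h.hasDerivAt h.strictAntiOn (h.mem u hu) (h.deriv_eq u hu)
    (h.self_le_rh hu) (h.isGreatest u hu) hρ hg

lemma pos_of_mem_Ico (h : TangentSetting f f' s rh R α V) (hu : u ∈ Ico 0 V) : 0 < s u := by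
  have huV : u ∈ Icc 0 V := Ico_subset_Icc_self hu
  have hV : V ∈ Icc 0 V := ⟨hu.1.trans hu.2.le, le_rfl⟩
  refine (h.mem u huV).1.lt_of_ne' fun h0 => ?_
  have hle := h.strictAntiOn.antitoneOn (h.mem u huV) (h.mem V hV) (h0 ▸ (h.mem V hV).1)
  rw [h.deriv_eq u huV, h.deriv_eq V hV] at hle
  linarith [hu.2]

lemma self_lt_rh (h : TangentSetting f f' s rh R α V) (hu : u ∈ Ico 0 V) : s u < rh u := by
  have huV : u ∈ Icc 0 V := Ico_subset_Icc_self hu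
  refine (h.self_le_rh huV).lt_of_ne fun heq => ?_
  have hpos : 0 < tangentGap f α (s u) u (s u) := by
    rw [tangentGap_self]
    exact mul_pos (by linarith [h.lt_one]) (tangent_intercept_pos h.hasDerivAt h.strictAntiOn
      (h.mem u huV) (h.deriv_eq u huV) h.apply_zero (h.pos_of_mem_Ico hu))
  have hzero := (h.isGreatest u huV).1.2
  rw [← heq] at hzero
  exact hpos.ne' hzero

lemma deriv_rh_lt (h : TangentSetting f f' s rh R α V) (hu : u ∈ Ico 0 V) : f' (rh u) < u := by
  have huV : u ∈ Icc 0 V := Ico_subset_Icc_self hu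
  simpa [h.deriv_eq u huV] using
    h.strictAntiOn (h.mem u huV) (h.isGreatest u huV).1.1 (h.self_lt_rh hu)

lemma strictAntiOn_rh (h : TangentSetting f f' s rh R α V) : StrictAntiOn rh (Icc 0 V) := by
  intro u₁ hu₁ u₂ hu₂ hlt
  have hs : s u₂ < s u₁ := (h.strictAntiOn.lt_iff_gt (h.mem u₁ hu₁) (h.mem u₂ hu₂)).1
    (by rwa [h.deriv_eq u₁ hu₁, h.deriv_eq u₂ hu₂])
  have hsr := h.self_lt_rh ⟨hu₁.1, hlt.trans_le hu₂.2⟩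
  have hαs : α * s u₁ ≤ s u₁ := mul_le_of_le_one_left (h.mem u₁ hu₁).1 h.lt_one.le
  have hr₁ := h.isGreatest u₁ hu₁
  refine h.rh_lt hu₂ ⟨hs.le.trans hsr.le, hr₁.1.1.2⟩ ?_
  have hL : f (s u₁) - u₂ * s u₁ ≤ f (s u₂) - u₂ * s u₂ := by
    simpa [h.deriv_eq u₂ hu₂] using
      sub_mul_deriv_le h.hasDerivAt h.strictAntiOn (h.mem u₂ hu₂) (h.mem u₁ hu₁)
  have h0 := hr₁.1.2
  rw [tangentGap_eq] at h0 ⊢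
  nlinarith [mul_le_mul_of_nonneg_left hL h.nonneg,
    mul_pos (sub_pos.2 hlt) (sub_pos.2 (hαs.trans_lt hsr))]

lemma continuousWithinAt_rh (h : TangentSetting f f' s rh R α V)
    (hsc : ContinuousWithinAt s (Icc 0 V) u) (hu : u ∈ Ico 0 V) :
    ContinuousWithinAt rh (Icc 0 V) u := by
  have huV : u ∈ Icc 0 V := Ico_subset_Icc_self hu
  have hsu := h.mem u huV
  have hsr := h.self_lt_rh hu
  have hru := (h.isGreatest u huV).1
  have hgap : ∀ ρ, ContinuousWithinAt (fun w => tangentGap f α (s w) w ρ) (Icc 0 V) u :=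
    fun ρ => continuousWithinAt_tangentGap (h.hasDerivAt _ hsu).continuousAt hsc
  have hgap_lt : ∀ ρ₁ ∈ Icc (s u) R, ∀ ρ₂ ∈ Icc (s u) R, ρ₁ < ρ₂ →
      tangentGap f α (s u) u ρ₂ < tangentGap f α (s u) u ρ₁ := fun ρ₁ hρ₁ ρ₂ hρ₂ =>
    tangentGap_lt_of_lt h.hasDerivAt h.strictAntiOn hsu (h.deriv_eq u huV) hρ₁ hρ₂
  refine tendsto_order.2 ⟨fun a ha => ?_, fun a ha => ?_⟩
  · set ρ := max ((a + rh u) / 2) (s u)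
    have hρ : ρ ∈ Icc (s u) R := ⟨le_max_right _ _, max_le (by linarith [hru.1.2]) hsu.2⟩
    have hpos : 0 < tangentGap f α (s u) u ρ := by
      simpa [hru.2] using hgap_lt ρ hρ (rh u) ⟨hsr.le, hru.1.2⟩ (max_lt (by linarith) hsr)
    filter_upwards [(hgap ρ).eventually_const_lt hpos, self_mem_nhdsWithin] with w hw hwV
    calc a < (a + rh u) / 2 := by linarith
      _ ≤ ρ := le_max_left _ _
      _ ≤ rh w := h.le_rh hwV ⟨hsu.1.trans hρ.1, hρ.2⟩ hw.le
  · rcases lt_or_ge R a with hRa | haR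
    · filter_upwards [self_mem_nhdsWithin] with w hw
      exact (h.isGreatest w hw).1.1.2.trans_lt hRa
    · have hneg : tangentGap f α (s u) u a < 0 := by
        simpa [hru.2] using hgap_lt (rh u) ⟨hsr.le, hru.1.2⟩ a ⟨(hsr.trans ha).le, haR⟩ ha
      filter_upwards [(hgap a).eventually_lt_const hneg, hsc.eventually_lt_const (hsr.trans ha),
        self_mem_nhdsWithin] with w hw hsw hwV
      exact h.rh_lt hwV ⟨hsw.le, haR⟩ hw

/-- Envelope argument: `f (s w) - w * s w` is the maximum of `f ρ - w * ρ`, which traps its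
difference quotient at `u` between `-s u` and `-s w`. -/
lemma hasDerivWithinAt_tangent_intercept (h : TangentSetting f f' s rh R α V)
    (hsc : ContinuousWithinAt s (Icc 0 V) u) (hu : u ∈ Icc 0 V) :
    HasDerivWithinAt (fun w => f (s w) - w * s w) (-s u) (Icc 0 V) u := by
  refine hasDerivWithinAt_of_abs_sub_le (σ := fun w => -s w) hsc.neg fun w hw => ?_
  have hw' : f (s u) - w * s u ≤ f (s w) - w * s w := by
    simpa [h.deriv_eq w hw] using
      sub_mul_deriv_le h.hasDerivAt h.strictAntiOn (h.mem w hw) (h.mem u hu)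
  have hu' : f (s w) - u * s w ≤ f (s u) - u * s u := by
    simpa [h.deriv_eq u hu] using
      sub_mul_deriv_le h.hasDerivAt h.strictAntiOn (h.mem u hu) (h.mem w hw)
  rw [neg_sub_neg, abs_sub_comm (s u), ← abs_mul, abs_le]
  constructor <;> nlinarith [abs_nonneg ((w - u) * (s w - s u)), neg_le_abs ((w - u) * (s w - s u))]

lemma hasDerivWithinAt_rh (h : TangentSetting f f' s rh R α V)
    (hsc : ContinuousWithinAt s (Icc 0 V) u) (hu : u ∈ Ico 0 V) :
    HasDerivWithinAt rh ((rh u - α * s u) / (f' (rh u) - u)) (Icc 0 V) u := by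
  have huV : u ∈ Icc 0 V := Ico_subset_Icc_self hu
  set L := fun w => f (s w) - w * s w
  have hL := (hasDerivWithinAt_iff_tendsto_slope.1 (h.hasDerivWithinAt_tangent_intercept hsc huV))
  have hrc : Tendsto rh (𝓝[Icc 0 V \ {u}] u) (𝓝 (rh u)) :=
    (h.continuousWithinAt_rh hsc hu).tendsto.mono_left (nhdsWithin_mono u sdiff_subset)
  have hru := (h.isGreatest u huV).1
  have hD : f' (rh u) - u ≠ 0 := (sub_neg.2 (h.deriv_rh_lt hu)).ne
  have hfs : Tendsto (fun w => slope f (rh u) (rh w)) (𝓝[Icc 0 V \ {u}] u) (𝓝 (f' (rh u))) := by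
    refine (hasDerivAt_iff_tendsto_slope.1 (h.hasDerivAt _ hru.1)).comp
      (tendsto_nhdsWithin_iff.2 ⟨hrc, ?_⟩)
    filter_upwards [self_mem_nhdsWithin] with w hw
    exact h.strictAntiOn_rh.injOn.ne hw.1 huV hw.2
  have hslope : ∀ w ∈ Icc 0 V \ {u},
      slope rh u w * (slope f (rh u) (rh w) - u) = α * slope L u w + rh w := by
    intro w hw
    have hwu : w - u ≠ 0 := sub_ne_zero.2 hw.2
    have hrr : rh w - rh u ≠ 0 := sub_ne_zero.2 (h.strictAntiOn_rh.injOn.ne hw.1 huV hw.2)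
    have hrw := (h.isGreatest w hw.1).1.2
    have hru' := hru.2
    simp only [slope_def_field, L]
    unfold tangentGap at hrw hru'
    field_simp
    linear_combination hrw - hru'
  have hlim : Tendsto (fun w => (α * slope L u w + rh w) / (slope f (rh u) (rh w) - u))
      (𝓝[Icc 0 V \ {u}] u) (𝓝 ((rh u - α * s u) / (f' (rh u) - u))) := by
    have := ((hL.const_mul α).add hrc).div (hfs.sub_const u) hD
    rwa [show α * -s u + rh u = rh u - α * s u by ring] at this
  rw [hasDerivWithinAt_iff_tendsto_slope]
  refine hlim.congr' ?_
  filter_upwards [self_mem_nhdsWithin, (hfs.sub_const u).eventually_ne hD] with w hw hne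
  rw [← hslope w hw, mul_div_cancel_right₀ _ hne]

lemma rh_deriv_le (h : TangentSetting f f' s rh R α V) {B : ℝ}
    (hB : MonotoneOn (fun x => f' x + B * x) (Icc 0 R)) (hu : u ∈ Ico 0 V) :
    (rh u - α * s u) / (f' (rh u) - u) ≤ -(1 / B) := by
  have huV : u ∈ Icc 0 V := Ico_subset_Icc_self hu
  have hsr := h.self_lt_rh hu
  have hD := h.deriv_rh_lt hu
  have hαs : α * s u ≤ s u := mul_le_of_le_one_left (h.mem u huV).1 h.lt_one.le
  have hlip : u - f' (rh u) ≤ B * (rh u - s u) := by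
    have := hB (h.mem u huV) (h.isGreatest u huV).1.1 hsr.le
    simp only [h.deriv_eq u huV] at this
    linarith
  have hB0 : 0 < B := by
    by_contra! hB0
    nlinarith [mul_nonpos_of_nonpos_of_nonneg hB0 (sub_nonneg.2 hsr.le)]
  rw [div_le_iff_of_neg (sub_neg.2 hD), neg_mul, one_div_mul_eq_div, ← neg_div, neg_sub,
    div_le_iff₀ hB0]
  nlinarith

end TangentSetting

theorem stmt_7_general
    (R β B α V : ℝ) (f f' f'' : ℝ → ℝ)
    (hβ : 0 < β) (hα : α ∈ Set.Ioo (0:ℝ) 1)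
    (hf0 : f 0 = 0) (hfR : f R = 0)
    (hfd1 : ∀ ρ ∈ Set.Icc (0:ℝ) R, HasDerivAt f (f' ρ) ρ)
    (hfd2 : ∀ ρ ∈ Set.Icc (0:ℝ) R, HasDerivAt f' (f'' ρ) ρ)
    (hconc : ∀ ρ ∈ Set.Icc (0:ℝ) R, -B ≤ f'' ρ ∧ f'' ρ ≤ -β)
    (rt : ℝ → ℝ)
    (hrt : ∀ u ∈ Set.Icc (0:ℝ) V, rt u ∈ Set.Icc (0:ℝ) (α * R) ∧
      HasDerivAt (fun x => α * f (x / α)) u (rt u))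
    (rh : ℝ → ℝ)
    (hrh : ∀ u ∈ Set.Icc (0:ℝ) V, IsGreatest
      {ρ : ℝ | ρ ∈ Set.Icc (0:ℝ) R ∧ f ρ = α * f (rt u / α) + u * (ρ - rt u)} (rh u))
    :
    StrictAntiOn rh (Set.Icc (0:ℝ) V) ∧
    ∀ u ∈ Set.Ico (0:ℝ) V, ∃ d : ℝ,
      HasDerivWithinAt rh d (Set.Icc (0:ℝ) V) u ∧ d ≤ -(1 / B) := by
  obtain ⟨hα0, hα1⟩ := hα
  have hβf' : AntitoneOn (fun x => f' x + β * x) (Icc 0 R) :=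
    antitoneOn_add_mul_of_hasDerivAt_le (convex_Icc 0 R) hfd2 fun x hx => (hconc x hx).2
  have hBf' : MonotoneOn (fun x => f' x + B * x) (Icc 0 R) :=
    monotoneOn_add_mul_of_le_hasDerivAt (convex_Icc 0 R) hfd2 fun x hx => (hconc x hx).1
  have hs : ∀ u ∈ Icc 0 V, rt u / α ∈ Icc 0 R ∧ f' (rt u / α) = u := fun u hu => by
    obtain ⟨⟨h0, hR⟩, hd⟩ := hrt u hu
    have hmem : rt u / α ∈ Icc 0 R := ⟨div_nonneg h0 hα0.le, (div_le_iff₀' hα0).2 hR⟩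
    exact ⟨hmem, (hasDerivAt_const_mul_comp_div hα0.ne' (hfd1 _ hmem)).unique hd⟩
  have h : TangentSetting f f' (fun u => rt u / α) rh R α V := by
    refine ⟨hfd1, hβf'.strictAntiOn_of_add_mul hβ, hf0, hfR, hα0.le, hα1, fun u hu => (hs u hu).1,
      fun u hu => (hs u hu).2, fun u hu => ?_⟩
    convert hrh u hu using 4 with ρ
    rw [tangentGap, mul_div_cancel₀ _ hα0.ne', sub_eq_zero]
  have hsc := (lipschitzOnWith_of_antitoneOn_add_mul hβf' hβ hs).continuousOn
  exact ⟨h.strictAntiOn_rh, fun u hu =>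
    ⟨_, h.hasDerivWithinAt_rh (hsc u (Ico_subset_Icc_self hu)) hu, h.rh_deriv_le hBf' hu⟩⟩

theorem stmt_7
    (R β B α V : ℝ) (f v f' f'' v' : ℝ → ℝ)
    (hR : 0 < R) (hβ : 0 < β) (hB : 0 < B) (hα : α ∈ Set.Ioo (0:ℝ) 1)
    (hf0 : f 0 = 0) (hfR : f R = 0)
    (hfv : ∀ ρ ∈ Set.Icc (0:ℝ) R, f ρ = ρ * v ρ)
    (hfd1 : ∀ ρ ∈ Set.Icc (0:ℝ) R, HasDerivAt f (f' ρ) ρ)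
    (hfd2 : ∀ ρ ∈ Set.Icc (0:ℝ) R, HasDerivAt f' (f'' ρ) ρ)
    (hfc : ContinuousOn f'' (Set.Icc (0:ℝ) R))
    (hconc : ∀ ρ ∈ Set.Icc (0:ℝ) R, -B ≤ f'' ρ ∧ f'' ρ ≤ -β)
    (hvd : ∀ ρ ∈ Set.Icc (0:ℝ) R, HasDerivAt v (v' ρ) ρ)
    (hv'neg : ∀ ρ ∈ Set.Ioo (0:ℝ) R, v' ρ < 0)
    (hvnn : ∀ ρ ∈ Set.Icc (0:ℝ) R, 0 ≤ v ρ)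
    (hV : V = v 0)
    (rt : ℝ → ℝ)
    (hrt : ∀ u ∈ Set.Icc (0:ℝ) V, rt u ∈ Set.Icc (0:ℝ) (α * R) ∧
      HasDerivAt (fun x => α * f (x / α)) u (rt u))
    (rc rh : ℝ → ℝ)
    (hrc : ∀ u ∈ Set.Icc (0:ℝ) V, IsLeast
      {ρ : ℝ | ρ ∈ Set.Icc (0:ℝ) R ∧ f ρ = α * f (rt u / α) + u * (ρ - rt u)} (rc u))
    (hrh : ∀ u ∈ Set.Icc (0:ℝ) V, IsGreatest
      {ρ : ℝ | ρ ∈ Set.Icc (0:ℝ) R ∧ f ρ = α * f (rt u / α) + u * (ρ - rt u)} (rh u))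
    :
    StrictAntiOn rh (Set.Icc (0:ℝ) V) ∧
    ∀ u ∈ Set.Ico (0:ℝ) V, ∃ d : ℝ,
      HasDerivWithinAt rh d (Set.Icc (0:ℝ) V) u ∧ d ≤ -(1 / B) :=
  stmt_7_general R β B α V f f' f'' hβ hα hf0 hfR hfd1 hfd2 hconc rt hrt rh hrh
end

section
/- Let u⁻, u⁺ ∈ [0,V] with u⁻ < u⁺. If ρ̂(u⁺) ≤ ρ̌(u⁻), then u⁺ − u⁻ ≥ (β/2) · ( ρ̂(u⁻) − ρ̌(u⁻) ). -/
/-! Write `a = ρ̌(u⁻)`, `b = ρ̂(u⁻)` and `c = ρ̂(u⁺) ≤ a`. Since `c` is the last point where `f`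
meets the line `φ_{u⁺}`, and `f(R) = 0 ≤ φ_{u⁺}(R)`, the graph of `f` leaves that line downwards
at `c`, so `f'(c) ≤ u⁺`; as `f'` is decreasing, `f'(a) ≤ u⁺`. Both `a` and `b` lie on `φ_{u⁻}`, so
`f(b) - f(a) = u⁻ (b - a)`, while `f'' ≤ -β` puts `f(b)` at least `β/2 (b - a)²` below the
tangent at `a`. Together, `u⁻ ≤ f'(a) - β/2 (b - a) ≤ u⁺ - β/2 (b - a)`. -/

open Set Filter Topology

theorem antitoneOn_Icc_of_hasDerivAt_nonpos {g g' : ℝ → ℝ} {a b : ℝ}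
    (hg : ∀ x ∈ Icc a b, HasDerivAt g (g' x) x) (hg' : ∀ x ∈ Ioo a b, g' x ≤ 0) :
    AntitoneOn g (Icc a b) := by
  refine antitoneOn_of_hasDerivWithinAt_nonpos (f' := g') (convex_Icc a b)
    (fun x hx => (hg x hx).continuousAt.continuousWithinAt) (fun x hx => ?_) (fun x hx => ?_)
  all_goals rw [interior_Icc] at hx
  · exact (hg x (Ioo_subset_Icc_self hx)).hasDerivWithinAt
  · exact hg' x hx

section StrongConcavity

variable {f f' f'' : ℝ → ℝ} {β a b : ℝ}

theorem antitoneOn_add_mul_of_deriv2_le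
    (hf' : ∀ x ∈ Icc a b, HasDerivAt f' (f'' x) x) (hf'' : ∀ x ∈ Icc a b, f'' x ≤ -β) :
    AntitoneOn (fun x => f' x + β * x) (Icc a b) := by
  have hderiv (x) (hx : x ∈ Icc a b) : HasDerivAt (fun x => f' x + β * x) (f'' x + β) x := by
    simpa only [mul_one] using (hf' x hx).fun_add ((hasDerivAt_id' x).const_mul β)
  exact antitoneOn_Icc_of_hasDerivAt_nonpos hderiv
    fun x hx => by linarith [hf'' x (Ioo_subset_Icc_self hx)]

theorem le_tangent_sub_sq_of_deriv2_le (hab : a ≤ b)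
    (hf : ∀ x ∈ Icc a b, HasDerivAt f (f' x) x)
    (hf' : ∀ x ∈ Icc a b, HasDerivAt f' (f'' x) x) (hf'' : ∀ x ∈ Icc a b, f'' x ≤ -β) :
    f b ≤ f a + f' a * (b - a) - β / 2 * (b - a) ^ 2 := by
  set m := f' a + β * a
  have hderiv (x) (hx : x ∈ Icc a b) :
      HasDerivAt (fun x => f x + β / 2 * x ^ 2 - m * x) (f' x + β * x - m) x := by
    refine (((hf x hx).fun_add (((hasDerivAt_id' x).fun_pow 2).const_mul (β / 2))).fun_sub
      ((hasDerivAt_id' x).const_mul m)).congr_deriv ?_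
    push_cast
    ring
  have hanti : AntitoneOn (fun x => f x + β / 2 * x ^ 2 - m * x) (Icc a b) := by
    refine antitoneOn_Icc_of_hasDerivAt_nonpos hderiv fun x hx => ?_
    have := antitoneOn_add_mul_of_deriv2_le hf' hf'' (left_mem_Icc.2 hab)
        (Ioo_subset_Icc_self hx) hx.1.le
    simp only [m] at this ⊢
    linarith
  have := hanti (left_mem_Icc.2 hab) (right_mem_Icc.2 hab) hab
  simp only [m] at this
  linarith

end StrongConcavity

theorem HasDerivAt.nonpos_of_forall_Ioc_le {g : ℝ → ℝ} {d c R : ℝ} (hcR : c < R)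
    (hd : HasDerivAt g d c) (hle : ∀ x ∈ Ioc c R, g x ≤ g c) : d ≤ 0 := by
  have hslope : Tendsto (slope g c) (𝓝[>] c) (𝓝 d) :=
    (hasDerivWithinAt_iff_tendsto_slope' (lt_irrefl c)).1 hd.hasDerivWithinAt
  refine le_of_tendsto hslope ?_
  filter_upwards [Ioc_mem_nhdsGT hcR] with x hx
  rw [slope_def_field]
  exact div_nonpos_of_nonpos_of_nonneg (by linarith [hle x hx]) (by linarith [hx.1])

theorem ContinuousOn.nonpos_of_ne_zero_of_nonpos_right {g : ℝ → ℝ} {c R : ℝ}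
    (hg : ContinuousOn g (Icc c R)) (hR : g R ≤ 0) (hne : ∀ x ∈ Ioc c R, g x ≠ 0) :
    ∀ x ∈ Ioc c R, g x ≤ 0 := by
  intro x hx
  by_contra! hpos
  obtain ⟨y, hy, hgy⟩ := intermediate_value_Icc' hx.2 (hg.mono (Icc_subset_Icc hx.1.le le_rfl))
    ⟨hR, hpos.le⟩
  exact hne y ⟨hx.1.trans_le hy.1, hy.2⟩ hgy

theorem HasDerivAt.le_of_last_contact {f : ℝ → ℝ} {d c R u : ℝ} (hd : HasDerivAt f d c)
    (hcR : c < R) (hf : ContinuousOn f (Icc c R))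
    (hR : f R ≤ f c + u * (R - c)) (hlast : ∀ x ∈ Ioc c R, f x ≠ f c + u * (x - c)) :
    d ≤ u := by
  set g := fun x => f x - (f c + u * (x - c))
  have hg : ContinuousOn g (Icc c R) := hf.sub (by fun_prop)
  have hgd : HasDerivAt g (d - u) c := by
    simpa using hd.fun_sub ((((hasDerivAt_id' c).sub_const c).const_mul u).const_add (f c))
  have hle := hg.nonpos_of_ne_zero_of_nonpos_right (by simpa [g] using hR)
    (fun x hx => sub_ne_zero.2 (hlast x hx))
  have := hgd.nonpos_of_forall_Ioc_le hcR (fun x hx => by simpa [g] using hle x hx)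
  linarith

theorem stmt_14_general
    (R β B α V : ℝ) (f v f' f'' : ℝ → ℝ)
    (hβ : 0 < β) (hα : α ∈ Set.Ioo (0:ℝ) 1)
    (hfR : f R = 0)
    (hfv : ∀ ρ ∈ Set.Icc (0:ℝ) R, f ρ = ρ * v ρ)
    (hfd1 : ∀ ρ ∈ Set.Icc (0:ℝ) R, HasDerivAt f (f' ρ) ρ)
    (hfd2 : ∀ ρ ∈ Set.Icc (0:ℝ) R, HasDerivAt f' (f'' ρ) ρ)
    (hconc : ∀ ρ ∈ Set.Icc (0:ℝ) R, -B ≤ f'' ρ ∧ f'' ρ ≤ -β)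
    (hvnn : ∀ ρ ∈ Set.Icc (0:ℝ) R, 0 ≤ v ρ)
    (rt : ℝ → ℝ)
    (hrt : ∀ u ∈ Set.Icc (0:ℝ) V, rt u ∈ Set.Icc (0:ℝ) (α * R) ∧
      HasDerivAt (fun x => α * f (x / α)) u (rt u))
    (rc rh : ℝ → ℝ)
    (hrc : ∀ u ∈ Set.Icc (0:ℝ) V, IsLeast
      {ρ : ℝ | ρ ∈ Set.Icc (0:ℝ) R ∧ f ρ = α * f (rt u / α) + u * (ρ - rt u)} (rc u))
    (hrh : ∀ u ∈ Set.Icc (0:ℝ) V, IsGreatest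
      {ρ : ℝ | ρ ∈ Set.Icc (0:ℝ) R ∧ f ρ = α * f (rt u / α) + u * (ρ - rt u)} (rh u))
    :
    ∀ um ∈ Set.Icc (0:ℝ) V, ∀ up ∈ Set.Icc (0:ℝ) V,
      um < up → rh up ≤ rc um → up - um ≥ (β / 2) * (rh um - rc um) := by
  intro um hum up hup hlt hca
  obtain ⟨⟨haI, hfa⟩, hamin⟩ := hrc um hum
  obtain ⟨⟨hbI, hfb⟩, -⟩ := hrh um hum
  obtain ⟨⟨hcI, hfc⟩, hcmax⟩ := hrh up hup
  obtain hab | hab := (hamin ⟨hbI, hfb⟩).eq_or_lt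
  · rw [hab, sub_self, mul_zero]
    linarith
  have hf'' : ∀ ρ ∈ Icc 0 R, f'' ρ ≤ -β := fun ρ hρ => (hconc ρ hρ).2
  have hR_below : f R ≤ f (rh up) + up * (R - rh up) := by
    obtain ⟨hrt₀, hrtR⟩ := (hrt up hup).1
    have hmem : rt up / α ∈ Icc 0 R :=
      ⟨div_nonneg hrt₀ hα.1.le, (div_le_iff₀ hα.1).2 (by linarith)⟩
    have : 0 ≤ f (rt up / α) := (hfv _ hmem).symm ▸ mul_nonneg hmem.1 (hvnn _ hmem)
    have hrt_le : rt up ≤ R := by nlinarith [hα.2, hcI.1.trans hcI.2]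
    linarith [mul_nonneg hα.1.le this, mul_nonneg hup.1 (sub_nonneg.2 hrt_le)]
  have hup_ge : f' (rh up) ≤ up := by
    refine (hfd1 _ hcI).le_of_last_contact (hca.trans_lt (hab.trans_le hbI.2))
      (fun x hx => (hfd1 x ⟨hcI.1.trans hx.1, hx.2⟩).continuousAt.continuousWithinAt)
      hR_below fun x hx hx' => ?_
    have : x ≤ rh up := hcmax ⟨⟨hcI.1.trans hx.1.le, hx.2⟩, by linarith⟩
    linarith [hx.1]
  have hsub_ca : Icc (rh up) (rc um) ⊆ Icc 0 R := Icc_subset_Icc hcI.1 haI.2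
  have hsub_ab : Icc (rc um) (rh um) ⊆ Icc 0 R := Icc_subset_Icc haI.1 hbI.2
  have hf'_anti := antitoneOn_add_mul_of_deriv2_le (fun x hx => hfd2 x (hsub_ca hx))
    (fun x hx => hf'' x (hsub_ca hx)) (left_mem_Icc.2 hca) (right_mem_Icc.2 hca) hca
  have htangent := le_tangent_sub_sq_of_deriv2_le hab.le (fun x hx => hfd1 x (hsub_ab hx))
    (fun x hx => hfd2 x (hsub_ab hx)) (fun x hx => hf'' x (hsub_ab hx))
  have hchord : f (rh um) - f (rc um) = um * (rh um - rc um) := by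
    rw [hfa, hfb]; ring
  have hum_le : um ≤ f' (rc um) - β / 2 * (rh um - rc um) := by
    refine le_of_mul_le_mul_right ?_ (sub_pos.2 hab)
    linarith
  simp only at hf'_anti
  linarith [mul_nonneg hβ.le (sub_nonneg.2 hca)]

theorem stmt_14
    (R β B α V : ℝ) (f v f' f'' v' : ℝ → ℝ)
    (hR : 0 < R) (hβ : 0 < β) (hB : 0 < B) (hα : α ∈ Set.Ioo (0:ℝ) 1)
    (hf0 : f 0 = 0) (hfR : f R = 0)
    (hfv : ∀ ρ ∈ Set.Icc (0:ℝ) R, f ρ = ρ * v ρ)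
    (hfd1 : ∀ ρ ∈ Set.Icc (0:ℝ) R, HasDerivAt f (f' ρ) ρ)
    (hfd2 : ∀ ρ ∈ Set.Icc (0:ℝ) R, HasDerivAt f' (f'' ρ) ρ)
    (hfc : ContinuousOn f'' (Set.Icc (0:ℝ) R))
    (hconc : ∀ ρ ∈ Set.Icc (0:ℝ) R, -B ≤ f'' ρ ∧ f'' ρ ≤ -β)
    (hvd : ∀ ρ ∈ Set.Icc (0:ℝ) R, HasDerivAt v (v' ρ) ρ)
    (hv'neg : ∀ ρ ∈ Set.Ioo (0:ℝ) R, v' ρ < 0)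
    (hvnn : ∀ ρ ∈ Set.Icc (0:ℝ) R, 0 ≤ v ρ)
    (hV : V = v 0)
    (rt : ℝ → ℝ)
    (hrt : ∀ u ∈ Set.Icc (0:ℝ) V, rt u ∈ Set.Icc (0:ℝ) (α * R) ∧
      HasDerivAt (fun x => α * f (x / α)) u (rt u))
    (rc rh : ℝ → ℝ)
    (hrc : ∀ u ∈ Set.Icc (0:ℝ) V, IsLeast
      {ρ : ℝ | ρ ∈ Set.Icc (0:ℝ) R ∧ f ρ = α * f (rt u / α) + u * (ρ - rt u)} (rc u))
    (hrh : ∀ u ∈ Set.Icc (0:ℝ) V, IsGreatest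
      {ρ : ℝ | ρ ∈ Set.Icc (0:ℝ) R ∧ f ρ = α * f (rt u / α) + u * (ρ - rt u)} (rh u))
    :
    ∀ um ∈ Set.Icc (0:ℝ) V, ∀ up ∈ Set.Icc (0:ℝ) V,
      um < up → rh up ≤ rc um → up - um ≥ (β / 2) * (rh um - rc um) :=
  stmt_14_general R β B α V f v f' f'' hβ hα hfR hfv hfd1 hfd2 hconc hvnn rt hrt rc rh hrc hrh
end

section
/- Let u⁻, u⁺ ∈ [0,V] with u⁺ < u⁻ < V. If ρ̂(u⁻) ≤ ρ̌(u⁺), then u⁻ − u⁺ ≥ (β/2) · ( ρ̂(u⁻) − ρ̌(u⁻) ). -/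
/-!
Let `a = ρ̌(u⁻)`, `b = ρ̂(u⁻)`. Since `f(b) - f(a) = u⁻ (b - a)` and `f + (β/2) ρ²` is concave,
the secant slope `u⁻` exceeds `f'(b)` by at least `(β/2)(b - a)`. On the other side,
`u⁺ = f'(y)` with `y = ρ̃_{u⁺}/α`, and `f - φ_{u⁺}` is `≤ 0` at `0` and `≥ 0` at `y`
(because `f(y) ≥ y f'(y)` and `0 ≤ α ≤ 1`), so the intermediate value theorem puts a contact
point of `φ_{u⁺}` in `[0, y]`. Hence `b ≤ ρ̌(u⁺) ≤ y`, and `f'` being decreasing gives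
`u⁺ = f'(y) ≤ f'(b)`.
-/

open Set

theorem ConcaveOn.le_add_mul_sub_of_hasDerivAt {D : Set ℝ} {F : ℝ → ℝ} {d x y : ℝ}
    (hF : ConcaveOn ℝ D F) (hx : x ∈ D) (hy : y ∈ D) (hd : HasDerivAt F d y) :
    F x ≤ F y + d * (x - y) := by
  rcases lt_trichotomy x y with hxy | rfl | hyx
  · have h := hF.le_slope_of_hasDerivAt hx hy hxy hd
    rw [slope_def_field, le_div_iff₀ (sub_pos.2 hxy)] at h
    linarith
  · simp
  · have h := hF.slope_le_of_hasDerivAt hy hx hyx hd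
    rw [slope_def_field, div_le_iff₀ (sub_pos.2 hyx)] at h
    linarith

theorem HasDerivAt.const_mul_comp_div {f : ℝ → ℝ} {d α x : ℝ} (hα : α ≠ 0)
    (hf : HasDerivAt f d (x / α)) : HasDerivAt (fun x => α * f (x / α)) d x :=
  ((hf.comp x ((hasDerivAt_id x).div_const α)).const_mul α).congr_deriv (by field_simp)

theorem HasDerivAt.add_half_mul_sq {f : ℝ → ℝ} {d β x : ℝ} (hf : HasDerivAt f d x) :
    HasDerivAt (fun x => f x + β / 2 * x ^ 2) (d + β * x) x :=
  (hf.add ((hasDerivAt_pow 2 x).const_mul (β / 2))).congr_deriv (by push_cast; ring)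

section StrongConcavity

variable {D : Set ℝ} {f f' f'' : ℝ → ℝ} {β : ℝ}

theorem antitoneOn_of_hasDerivAt_nonpos (hD : Convex ℝ D)
    (hf' : ∀ x ∈ D, HasDerivAt f' (f'' x) x) (h : ∀ x ∈ D, f'' x ≤ 0) : AntitoneOn f' D :=
  antitoneOn_of_hasDerivWithinAt_nonpos hD
    (fun x hx => (hf' x hx).continuousAt.continuousWithinAt)
    (fun x hx => (hf' x (interior_subset hx)).hasDerivWithinAt)
    (fun x hx => h x (interior_subset hx))

theorem concaveOn_add_half_mul_sq (hD : Convex ℝ D) (hf : ∀ x ∈ D, HasDerivAt f (f' x) x)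
    (hf' : ∀ x ∈ D, HasDerivAt f' (f'' x) x) (hβ : ∀ x ∈ D, f'' x ≤ -β) :
    ConcaveOn ℝ D (fun x => f x + β / 2 * x ^ 2) := by
  have hF : ∀ x ∈ D, HasDerivAt (fun x => f x + β / 2 * x ^ 2) (f' x + β * x) x :=
    fun x hx => (hf x hx).add_half_mul_sq
  have hF' : ∀ x ∈ D, HasDerivAt (fun x => f' x + β * x) (f'' x + β) x :=
    fun x hx => ((hf' x hx).add ((hasDerivAt_id x).const_mul β)).congr_deriv (by simp)
  refine concaveOn_of_hasDerivWithinAt2_nonpos hD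
    (fun x hx => (hF x hx).continuousAt.continuousWithinAt)
    (fun x hx => (hF x (interior_subset hx)).hasDerivWithinAt)
    (fun x hx => (hF' x (interior_subset hx)).hasDerivWithinAt) (fun x hx => ?_)
  linarith [hβ x (interior_subset hx)]

theorem le_add_mul_sub_sub_half_mul_sq (hD : Convex ℝ D) (hf : ∀ x ∈ D, HasDerivAt f (f' x) x)
    (hf' : ∀ x ∈ D, HasDerivAt f' (f'' x) x) (hβ : ∀ x ∈ D, f'' x ≤ -β) {x y : ℝ}
    (hx : x ∈ D) (hy : y ∈ D) :
    f x ≤ f y + f' y * (x - y) - β / 2 * (x - y) ^ 2 := by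
  have h := (concaveOn_add_half_mul_sq hD hf hf' hβ).le_add_mul_sub_of_hasDerivAt hx hy
    (hf y hy).add_half_mul_sq
  linarith

theorem add_half_mul_le_of_sub_eq_mul (hD : Convex ℝ D) (hf : ∀ x ∈ D, HasDerivAt f (f' x) x)
    (hf' : ∀ x ∈ D, HasDerivAt f' (f'' x) x) (hβ : ∀ x ∈ D, f'' x ≤ -β) {a b u : ℝ}
    (ha : a ∈ D) (hb : b ∈ D) (hab : a < b) (hslope : f b - f a = u * (b - a)) :
    f' b + β / 2 * (b - a) ≤ u := by
  have h := le_add_mul_sub_sub_half_mul_sq hD hf hf' hβ ha hb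
  refine le_of_mul_le_mul_right ?_ (sub_pos.2 hab)
  nlinarith

end StrongConcavity

theorem exists_mem_Icc_eq_scaled_line {f : ℝ → ℝ} {α d y : ℝ} (hα : α ∈ Icc (0 : ℝ) 1)
    (hy : 0 ≤ y) (hf : ContinuousOn f (Icc 0 y)) (hf0 : f 0 = 0) (hdy : d * y ≤ f y) :
    ∃ z ∈ Icc 0 y, f z = α * f y + d * (z - α * y) := by
  have hg : ContinuousOn (fun z => f z - (α * f y + d * (z - α * y))) (Icc 0 y) :=
    hf.sub (by fun_prop)
  have h0 : 0 ∈ Icc (f 0 - (α * f y + d * (0 - α * y))) (f y - (α * f y + d * (y - α * y))) := by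
    constructor <;> nlinarith [hα.1, hα.2]
  obtain ⟨z, hz, hz0⟩ := intermediate_value_Icc hy hg h0
  exact ⟨z, hz, sub_eq_zero.1 hz0⟩

theorem stmt_15_general
    (R β B α V : ℝ) (f f' f'' : ℝ → ℝ)
    (hβ : 0 < β) (hα : α ∈ Set.Ioo (0:ℝ) 1)
    (hf0 : f 0 = 0)
    (hfd1 : ∀ ρ ∈ Set.Icc (0:ℝ) R, HasDerivAt f (f' ρ) ρ)
    (hfd2 : ∀ ρ ∈ Set.Icc (0:ℝ) R, HasDerivAt f' (f'' ρ) ρ)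
    (hconc : ∀ ρ ∈ Set.Icc (0:ℝ) R, -B ≤ f'' ρ ∧ f'' ρ ≤ -β)
    (rt : ℝ → ℝ)
    (hrt : ∀ u ∈ Set.Icc (0:ℝ) V, rt u ∈ Set.Icc (0:ℝ) (α * R) ∧
      HasDerivAt (fun x => α * f (x / α)) u (rt u))
    (rc rh : ℝ → ℝ)
    (hrc : ∀ u ∈ Set.Icc (0:ℝ) V, IsLeast
      {ρ : ℝ | ρ ∈ Set.Icc (0:ℝ) R ∧ f ρ = α * f (rt u / α) + u * (ρ - rt u)} (rc u))
    (hrh : ∀ u ∈ Set.Icc (0:ℝ) V, IsGreatest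
      {ρ : ℝ | ρ ∈ Set.Icc (0:ℝ) R ∧ f ρ = α * f (rt u / α) + u * (ρ - rt u)} (rh u))
    :
    ∀ um ∈ Set.Icc (0:ℝ) V, ∀ up ∈ Set.Icc (0:ℝ) V,
      up < um → um < V → rh um ≤ rc up → um - up ≥ (β / 2) * (rh um - rc um) := by
  intro um hum up hup hlt _ hle
  have hD : Convex ℝ (Icc (0 : ℝ) R) := convex_Icc 0 R
  have hβ' : ∀ ρ ∈ Icc (0 : ℝ) R, f'' ρ ≤ -β := fun ρ hρ => (hconc ρ hρ).2
  obtain ⟨⟨ha, hfa⟩, -⟩ := hrc um hum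
  obtain ⟨⟨hb, hfb⟩, hb_max⟩ := hrh um hum
  rcases (hb_max ⟨ha, hfa⟩).eq_or_lt with hab | hab
  · rw [hab, sub_self, mul_zero]
    linarith
  have hum_ge := add_half_mul_le_of_sub_eq_mul (u := um) hD hfd1 hfd2 hβ' ha hb hab
    (by rw [hfa, hfb]; ring)
  obtain ⟨⟨hrt0, hrtR⟩, hrt_deriv⟩ := hrt up hup
  set y := rt up / α
  have hαy : α * y = rt up := mul_div_cancel₀ _ hα.1.ne'
  have hy : y ∈ Icc (0 : ℝ) R := ⟨div_nonneg hrt0 hα.1.le, (div_le_iff₀' hα.1).2 hrtR⟩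
  have hup_eq : up = f' y := hrt_deriv.unique (HasDerivAt.const_mul_comp_div hα.1.ne' (hfd1 y hy))
  have hf'y : f' y * y ≤ f y := by
    have h := le_add_mul_sub_sub_half_mul_sq hD hfd1 hfd2 hβ' ⟨le_rfl, hy.1.trans hy.2⟩ hy
    nlinarith
  have hsub : Icc 0 y ⊆ Icc (0 : ℝ) R := Icc_subset_Icc_right hy.2
  obtain ⟨z, hz, hfz⟩ := exists_mem_Icc_eq_scaled_line ⟨hα.1.le, hα.2.le⟩ hy.1
    (fun x hx => (hfd1 x (hsub hx)).continuousAt.continuousWithinAt) hf0 hf'y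
  have hcz : rc up ≤ z := (hrc up hup).2 ⟨hsub hz, by rw [hfz, ← hup_eq, hαy]⟩
  have hf'_anti : AntitoneOn f' (Icc 0 R) :=
    antitoneOn_of_hasDerivAt_nonpos hD hfd2 fun ρ hρ => (hβ' ρ hρ).trans (by linarith)
  have hf'yb : f' y ≤ f' (rh um) := hf'_anti hb hy (hle.trans (hcz.trans hz.2))
  linarith

theorem stmt_15
    (R β B α V : ℝ) (f v f' f'' v' : ℝ → ℝ)
    (hR : 0 < R) (hβ : 0 < β) (hB : 0 < B) (hα : α ∈ Set.Ioo (0:ℝ) 1)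
    (hf0 : f 0 = 0) (hfR : f R = 0)
    (hfv : ∀ ρ ∈ Set.Icc (0:ℝ) R, f ρ = ρ * v ρ)
    (hfd1 : ∀ ρ ∈ Set.Icc (0:ℝ) R, HasDerivAt f (f' ρ) ρ)
    (hfd2 : ∀ ρ ∈ Set.Icc (0:ℝ) R, HasDerivAt f' (f'' ρ) ρ)
    (hfc : ContinuousOn f'' (Set.Icc (0:ℝ) R))
    (hconc : ∀ ρ ∈ Set.Icc (0:ℝ) R, -B ≤ f'' ρ ∧ f'' ρ ≤ -β)
    (hvd : ∀ ρ ∈ Set.Icc (0:ℝ) R, HasDerivAt v (v' ρ) ρ)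
    (hv'neg : ∀ ρ ∈ Set.Ioo (0:ℝ) R, v' ρ < 0)
    (hvnn : ∀ ρ ∈ Set.Icc (0:ℝ) R, 0 ≤ v ρ)
    (hV : V = v 0)
    (rt : ℝ → ℝ)
    (hrt : ∀ u ∈ Set.Icc (0:ℝ) V, rt u ∈ Set.Icc (0:ℝ) (α * R) ∧
      HasDerivAt (fun x => α * f (x / α)) u (rt u))
    (rc rh : ℝ → ℝ)
    (hrc : ∀ u ∈ Set.Icc (0:ℝ) V, IsLeast
      {ρ : ℝ | ρ ∈ Set.Icc (0:ℝ) R ∧ f ρ = α * f (rt u / α) + u * (ρ - rt u)} (rc u))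
    (hrh : ∀ u ∈ Set.Icc (0:ℝ) V, IsGreatest
      {ρ : ℝ | ρ ∈ Set.Icc (0:ℝ) R ∧ f ρ = α * f (rt u / α) + u * (ρ - rt u)} (rh u))
    :
    ∀ um ∈ Set.Icc (0:ℝ) V, ∀ up ∈ Set.Icc (0:ℝ) V,
      up < um → um < V → rh um ≤ rc up → um - up ≥ (β / 2) * (rh um - rc um) :=
  stmt_15_general R β B α V f f' f'' hβ hα hf0 hfd1 hfd2 hconc rt hrt rc rh hrc hrh
end
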